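/- arXiv:1612.02845 — 4 statements merged into one kernel-verified Lean document; each statement's English description precedes it below -/
import Mathlib

section
/- Let C = C(c,d) be a split Cartan subgroup of GL₂(ℤ_ℓ). Then for all integers a, b ≥ 0: μ_{a,b}(C) equals (ℓ−2)²/(ℓ−1)² if a = 0 and b = 0; equals 2(ℓ−2)/(ℓ−1) · ℓ^{−b} if a = 0 and b > 0; equals ℓ^{−2a} if a > 0 and b = 0; and equals 2·ℓ^{−2a−b} if a > 0 and b > 0. -/
open Matrix Polynomial

/-- Reduction modulo `p^n` on `GL₂(ℤ_p)`. -/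
noncomputable def redGL (p : ℕ) [Fact p.Prime] (n : ℕ) :
    GL (Fin 2) ℤ_[p] →* GL (Fin 2) (ZMod (p ^ n)) :=
  Matrix.GeneralLinearGroup.map (PadicInt.toZModPow n)

/-- `M ≡ I (mod p^k)`. -/
def modI {p : ℕ} [Fact p.Prime] (k : ℕ) (M : GL (Fin 2) ℤ_[p]) : Prop :=
  ∀ i j, ((p : ℤ_[p]) ^ k) ∣ (((M : Matrix (Fin 2) (Fin 2) ℤ_[p]) - 1) i j)

/-- `v_p x = k`, expressed through divisibility (in particular `x ≠ 0`). -/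
def valEq {p : ℕ} [Fact p.Prime] (x : ℤ_[p]) (k : ℕ) : Prop :=
  ((p : ℤ_[p]) ^ k ∣ x) ∧ ¬ ((p : ℤ_[p]) ^ (k + 1) ∣ x)

/-- Condition `E(a,b)`. -/
def CondE {p : ℕ} [Fact p.Prime] (a b : ℕ) (M : GL (Fin 2) ℤ_[p]) : Prop :=
  modI a M ∧ ¬ modI (a + 1) M ∧
    valEq (((M : Matrix (Fin 2) (Fin 2) ℤ_[p]) - 1).det) (2 * a + b)

/-- `𝓜_{a,b}(G)`. -/
def Mset {p : ℕ} [Fact p.Prime] (G : Subgroup (GL (Fin 2) ℤ_[p])) (a b : ℕ) :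
    Set (GL (Fin 2) ℤ_[p]) :=
  {M | M ∈ G ∧ CondE a b M}

/-- `μ_{a,b}(G)`. -/
noncomputable def mu (p : ℕ) [Fact p.Prime] (G : Subgroup (GL (Fin 2) ℤ_[p])) (a b : ℕ) : ℚ :=
  ((redGL p (a + b + 1) '' Mset G a b).ncard : ℚ) /
    ((redGL p (a + b + 1) '' (G : Set (GL (Fin 2) ℤ_[p]))).ncard : ℚ)

/-- `G` is open in `GL₂(ℤ_p)`. -/
def IsOpenSub {p : ℕ} [Fact p.Prime] (G : Subgroup (GL (Fin 2) ℤ_[p])) : Prop :=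
  ∃ m : ℕ, 1 ≤ m ∧ ∀ M : GL (Fin 2) ℤ_[p], modI m M → M ∈ G

/-- The underlying set of the Cartan subgroup `C(c,d)`. -/
def CartanSet {p : ℕ} [Fact p.Prime] (c d : ℤ_[p]) : Set (GL (Fin 2) ℤ_[p]) :=
  {M | ∃ x y : ℤ_[p], (M : Matrix (Fin 2) (Fin 2) ℤ_[p]) = !![x, d * y; y, x + c * y]}

/-- `C` is the Cartan subgroup with parameters `(c,d)`. -/
def IsCartan {p : ℕ} [Fact p.Prime] (c d : ℤ_[p]) (C : Subgroup (GL (Fin 2) ℤ_[p])) : Prop :=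
  (C : Set (GL (Fin 2) ℤ_[p])) = CartanSet c d

/-- `(c,d)` are normalized parameters. -/
def NormalizedParams (p : ℕ) [Fact p.Prime] (c d : ℤ_[p]) : Prop :=
  (c = 0 ∧ d ≠ 0) ∨ (p = 2 ∧ c = 1 ∧ (d = 0 ∨ IsUnit d))

/-- `(c,d)` are parameters of a split Cartan subgroup. -/
def SplitParams (p : ℕ) [Fact p.Prime] (c d : ℤ_[p]) : Prop :=
  (Odd p ∧ c = 0 ∧ ∃ u : ℤ_[p], IsUnit u ∧ d = u ^ 2) ∨ (p = 2 ∧ c = 1 ∧ d = 0)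

/-- `(c,d)` are parameters of a nonsplit Cartan subgroup. -/
def NonsplitParams (p : ℕ) [Fact p.Prime] (c d : ℤ_[p]) : Prop :=
  (Odd p ∧ c = 0 ∧ IsUnit d ∧ ¬ IsSquare d) ∨ (p = 2 ∧ c = 1 ∧ IsUnit d)

/-!
A split Cartan subgroup is conjugate in `GL₂(ℤ_ℓ)` to the diagonal torus, and `μ_{a,b}` is
invariant under conjugation, since conjugation preserves both `M ≡ I (mod ℓ^k)` and
`det (M - I)`. For `M = diag(s, t)`, condition `E(a,b)` says that the valuations of `s - 1` and
`t - 1` are `a` and `a + b` in some order. Modulo `ℓ^n`, the units `s` with `v(s - 1) = k`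
exactly are the difference of two consecutive kernels of `(ℤ/ℓ^n)ˣ → (ℤ/ℓ^j)ˣ`, so they form a
proportion `(ℓ-2)/(ℓ-1)` (for `k = 0`) or `ℓ^{-k}` (for `k ≥ 1`) of `(ℤ/ℓ^n)ˣ`; `μ_{a,b}` is the
product of the two proportions, counted twice when `b > 0`.
-/

lemma card_ker_unitsMap_mul_totient {m N : ℕ} [NeZero N] (h : m ∣ N) :
    Nat.card (ZMod.unitsMap h).ker * m.totient = N.totient := by
  have : NeZero m := ⟨fun hm => NeZero.ne N (Nat.eq_zero_of_zero_dvd (hm ▸ h))⟩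
  rw [← ZMod.card_units_eq_totient, ← ZMod.card_units_eq_totient, ← Nat.card_eq_fintype_card,
    ← Nat.card_eq_fintype_card, ← (ZMod.unitsMap h).ker.card_mul_index, Subgroup.index_ker,
    MonoidHom.range_eq_top_of_surjective _ (ZMod.unitsMap_surjective h), Subgroup.card_top]

lemma ker_unitsMap_pow_mono (p : ℕ) {j j' n : ℕ} (hj : j ≤ j') (hj' : j' ≤ n) :
    (ZMod.unitsMap (pow_dvd_pow p hj')).ker ≤ (ZMod.unitsMap (pow_dvd_pow p (hj.trans hj'))).ker :=
  fun x hx => by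
    rw [MonoidHom.mem_ker, ← ZMod.unitsMap_comp (pow_dvd_pow p hj) (pow_dvd_pow p hj'),
      MonoidHom.comp_apply, hx, map_one]

def unitsLevel (p : ℕ) {n k : ℕ} (hk : k + 1 ≤ n) : Set (ZMod (p ^ n))ˣ :=
  ((ZMod.unitsMap (pow_dvd_pow p (Nat.le_of_succ_le hk))).ker : Set (ZMod (p ^ n))ˣ) \
    (ZMod.unitsMap (pow_dvd_pow p hk)).ker

lemma disjoint_unitsLevel (p : ℕ) {n k k' : ℕ} (hk : k + 1 ≤ n) (hk' : k' + 1 ≤ n)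
    (hlt : k < k') :
    Disjoint (unitsLevel p hk) (unitsLevel p hk') :=
  Set.disjoint_left.mpr fun _ hx hx' =>
    hx.2 (ker_unitsMap_pow_mono p hlt (Nat.le_of_succ_le hk') hx'.1)

lemma dvd_mul_mul_apply {R : Type*} [CommRing R] {n : Type*} [Fintype n] {x : R}
    {N : Matrix n n R} (h : ∀ i j, x ∣ N i j) (A B : Matrix n n R) (i j : n) :
    x ∣ (A * N * B) i j :=
  Finset.dvd_sum fun l _ => (Finset.dvd_sum fun k _ => (h k l).mul_left _).mul_right _

lemma coe_conj_sub_one {R : Type*} [CommRing R] {n : Type*} [Fintype n] [DecidableEq n]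
    (g M : GL n R) :
    ((MulAut.conj g M : GL n R) : Matrix n n R) - 1
      = (g : Matrix n n R) * ((M : Matrix n n R) - 1) * ((g⁻¹ : GL n R) : Matrix n n R) := by
  rw [MulAut.conj_apply, Units.val_mul, Units.val_mul, Matrix.mul_sub, Matrix.sub_mul,
    Matrix.mul_one, Units.mul_inv]

lemma emultiplicity_split_iff {α : Type*} [CommMonoidWithZero α] [IsCancelMulZero α]
    {π e f : α} (hπ : Prime π) (a b : ℕ) :
    ((π ^ a ∣ e ∧ π ^ a ∣ f) ∧ ¬ (π ^ (a + 1) ∣ e ∧ π ^ (a + 1) ∣ f) ∧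
        emultiplicity π (e * f) = ↑(2 * a + b)) ↔
      (emultiplicity π e = a ∧ emultiplicity π f = ↑(a + b)) ∨
        (emultiplicity π e = ↑(a + b) ∧ emultiplicity π f = a) := by
  simp only [pow_dvd_iff_le_emultiplicity, emultiplicity_mul hπ]
  induction emultiplicity π e using ENat.recTopCoe <;>
    induction emultiplicity π f using ENat.recTopCoe <;> simp [← Nat.cast_add]
  omega

section Diagonal

variable (R : Type*) [CommRing R]

def diagGL : Rˣ × Rˣ →* GL (Fin 2) R where
  toFun st := ⟨diagonal ![(st.1 : R), st.2], diagonal ![(st.1⁻¹ : Rˣ), (st.2⁻¹ : Rˣ)],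
    by ext i j; fin_cases i <;> fin_cases j <;> simp,
    by ext i j; fin_cases i <;> fin_cases j <;> simp⟩
  map_one' := by ext i j; fin_cases i <;> fin_cases j <;> simp
  map_mul' _ _ := by ext i j; fin_cases i <;> fin_cases j <;> simp

variable {R}

@[simp]
lemma coe_diagGL (st : Rˣ × Rˣ) :
    (diagGL R st : Matrix (Fin 2) (Fin 2) R) = diagonal ![(st.1 : R), st.2] := rfl

lemma diagGL_injective : Function.Injective (diagGL R) := by
  intro st st' h
  have h' := congrArg (fun M : GL (Fin 2) R => ((M : Matrix (Fin 2) (Fin 2) R) 0 0,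
    (M : Matrix (Fin 2) (Fin 2) R) 1 1)) h
  simp only [coe_diagGL, diagonal_apply_eq, Prod.mk.injEq] at h'
  exact Prod.ext (Units.ext h'.1) (Units.ext h'.2)

lemma mem_range_diagGL_iff {M : GL (Fin 2) R} :
    M ∈ (diagGL R).range ↔ ∃ s t : R, (M : Matrix (Fin 2) (Fin 2) R) = diagonal ![s, t] := by
  refine ⟨fun ⟨st, hst⟩ => ⟨st.1, st.2, by rw [← hst, coe_diagGL]⟩, fun ⟨s, t, hM⟩ => ?_⟩
  have hdet : IsUnit (s * t) := by
    simpa [hM, Matrix.det_fin_two] using M.isUnit.map Matrix.detMonoidHom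
  refine ⟨((isUnit_of_mul_isUnit_left hdet).unit, (isUnit_of_mul_isUnit_right hdet).unit), ?_⟩
  exact Units.ext (by rw [coe_diagGL, hM]; rfl)

lemma mem_map_conj_range_diagGL_iff {g M : GL (Fin 2) R} :
    M ∈ (diagGL R).range.map (MulAut.conj g).toMonoidHom ↔
      ∃ s t : R, (M : Matrix (Fin 2) (Fin 2) R) * g = g * diagonal ![s, t] := by
  rw [Subgroup.mem_map_equiv, mem_range_diagGL_iff]
  refine exists₂_congr fun s t => ?_
  rw [MulAut.conj_symm_apply, Units.val_mul, Units.val_mul, Matrix.mul_assoc,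
    Units.inv_mul_eq_iff_eq_mul]

lemma coe_diagGL_sub_one (st : Rˣ × Rˣ) :
    (diagGL R st : Matrix (Fin 2) (Fin 2) R) - 1 = diagonal ![(st.1 : R) - 1, st.2 - 1] := by
  ext i j; fin_cases i <;> fin_cases j <;> simp

end Diagonal

section CartanForms

variable {R : Type*} [CommRing R]

lemma exists_cartan_form_iff_of_sq {u : R} (hu : IsUnit (2 * u)) (M : Matrix (Fin 2) (Fin 2) R) :
    (∃ x y, M = !![x, u ^ 2 * y; y, x + 0 * y]) ↔
      ∃ s t, M * !![u, -u; 1, 1] = !![u, -u; 1, 1] * diagonal ![s, t] := by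
  obtain ⟨w, hw⟩ := hu.exists_right_inv
  rw [M.eta_fin_two]
  simp only [diagonal_fin_two, mul_fin_two, ← Matrix.ext_iff, Fin.forall_fin_two, of_apply,
    cons_val', cons_val_zero, cons_val_one, empty_val', cons_val_fin_one]
  constructor
  · rintro ⟨x, y, ⟨h₀₀, h₀₁⟩, h₁₀, h₁₁⟩
    refine ⟨x + u * y, x - u * y, ⟨?_, ?_⟩, ?_, ?_⟩ <;> simp only [h₀₀, h₀₁, h₁₀, h₁₁] <;> ring
  · rintro ⟨s, t, ⟨e₁, e₂⟩, e₃, e₄⟩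
    refine ⟨(s + t) * u * w, (s - t) * w, ⟨?_, ?_⟩, ?_, ?_⟩
    · linear_combination w * (e₁ - e₂) - M 0 0 * hw
    · linear_combination u * w * (e₁ + e₂) - M 0 1 * hw
    · linear_combination w * (e₃ - e₄) - M 1 0 * hw
    · linear_combination u * w * (e₃ + e₄) - M 1 1 * hw

lemma exists_cartan_form_iff_of_triangular (M : Matrix (Fin 2) (Fin 2) R) :
    (∃ x y, M = !![x, 0 * y; y, x + 1 * y]) ↔
      ∃ s t, M * !![1, 0; -1, 1] = !![1, 0; -1, 1] * diagonal ![s, t] := by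
  rw [M.eta_fin_two]
  simp only [diagonal_fin_two, mul_fin_two, ← Matrix.ext_iff, Fin.forall_fin_two, of_apply,
    cons_val', cons_val_zero, cons_val_one, empty_val', cons_val_fin_one]
  constructor
  · rintro ⟨x, y, ⟨h₀₀, h₀₁⟩, h₁₀, h₁₁⟩
    refine ⟨x, x + y, ⟨?_, ?_⟩, ?_, ?_⟩ <;> simp only [h₀₀, h₀₁, h₁₀, h₁₁] <;> ring
  · rintro ⟨s, t, ⟨e₁, e₂⟩, e₃, e₄⟩
    refine ⟨s, t - s, ⟨?_, ?_⟩, ?_, ?_⟩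
    · linear_combination e₁ + e₂
    · linear_combination e₂
    · linear_combination e₃ + e₄
    · linear_combination e₄

end CartanForms

variable {p : ℕ} [Fact p.Prime]

lemma modI_conj {k : ℕ} {M : GL (Fin 2) ℤ_[p]} (g : GL (Fin 2) ℤ_[p]) (h : modI k M) :
    modI k (MulAut.conj g M) := by
  intro i j
  rw [coe_conj_sub_one]
  exact dvd_mul_mul_apply h _ _ i j

lemma modI_conj_iff (k : ℕ) (g M : GL (Fin 2) ℤ_[p]) : modI k (MulAut.conj g M) ↔ modI k M :=
  ⟨fun h => by simpa [mul_assoc] using modI_conj g⁻¹ h, modI_conj g⟩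

lemma condE_conj_iff (a b : ℕ) (g M : GL (Fin 2) ℤ_[p]) :
    CondE a b (MulAut.conj g M) ↔ CondE a b M := by
  rw [CondE, CondE, modI_conj_iff, modI_conj_iff, coe_conj_sub_one, Matrix.det_units_conj]

lemma Mset_map_conj (G : Subgroup (GL (Fin 2) ℤ_[p])) (g : GL (Fin 2) ℤ_[p]) (a b : ℕ) :
    Mset (G.map (MulAut.conj g).toMonoidHom) a b = MulAut.conj g '' Mset G a b := by
  ext M
  rw [← MulEquiv.coe_toEquiv, Equiv.image_eq_preimage_symm, MulEquiv.coe_toEquiv_symm]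
  simp only [Mset, Set.mem_preimage, Set.mem_ofPred, Subgroup.mem_map_equiv]
  rw [← condE_conj_iff a b g ((MulAut.conj g).symm M), MulEquiv.apply_symm_apply]

lemma ncard_redGL_image_conj (n : ℕ) (S : Set (GL (Fin 2) ℤ_[p])) (g : GL (Fin 2) ℤ_[p]) :
    (redGL p n '' (MulAut.conj g '' S)).ncard = (redGL p n '' S).ncard := by
  have : redGL p n '' (MulAut.conj g '' S) = MulAut.conj (redGL p n g) '' (redGL p n '' S) := by
    simp only [Set.image_image, MulAut.conj_apply, map_mul, map_inv]
  rw [this, Set.ncard_image_of_injective _ (MulAut.conj _).injective]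

lemma mu_map_conj (G : Subgroup (GL (Fin 2) ℤ_[p])) (g : GL (Fin 2) ℤ_[p]) (a b : ℕ) :
    mu p (G.map (MulAut.conj g).toMonoidHom) a b = mu p G a b := by
  simp only [mu, Mset_map_conj, Subgroup.coe_map, MulEquiv.coe_toMonoidHom,
    ncard_redGL_image_conj]

lemma isUnit_two_of_odd (hodd : Odd p) : IsUnit (2 : ℤ_[p]) := by
  rw [PadicInt.isUnit_iff, ← Nat.cast_ofNat, PadicInt.norm_natCast_eq_one_iff]
  exact Nat.coprime_two_right.mpr hodd

lemma SplitParams.exists_eigenbasis {c d : ℤ_[p]} (hsplit : SplitParams p c d) :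
    ∃ P : Matrix (Fin 2) (Fin 2) ℤ_[p], IsUnit P ∧ ∀ M : Matrix (Fin 2) (Fin 2) ℤ_[p],
      (∃ x y, M = !![x, d * y; y, x + c * y]) ↔ ∃ s t, M * P = P * diagonal ![s, t] := by
  -- the columns of `P` are common eigenvectors of all matrices of the Cartan subgroup
  rcases hsplit with ⟨hodd, rfl, u, hu, rfl⟩ | ⟨-, rfl, rfl⟩
  · have h2u : IsUnit (2 * u) := (isUnit_two_of_odd hodd).mul hu
    refine ⟨!![u, -u; 1, 1], ?_, exists_cartan_form_iff_of_sq h2u⟩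
    rw [Matrix.isUnit_iff_isUnit_det, det_fin_two_of]
    convert h2u using 1
    ring
  · refine ⟨!![1, 0; -1, 1], ?_, exists_cartan_form_iff_of_triangular⟩
    simp [Matrix.isUnit_iff_isUnit_det, det_fin_two_of]

lemma IsCartan.exists_eq_map_conj_range_diagGL {c d : ℤ_[p]} {C : Subgroup (GL (Fin 2) ℤ_[p])}
    (hC : IsCartan c d C) (hsplit : SplitParams p c d) :
    ∃ g : GL (Fin 2) ℤ_[p], C = (diagGL ℤ_[p]).range.map (MulAut.conj g).toMonoidHom := by
  obtain ⟨P, hP, hform⟩ := hsplit.exists_eigenbasis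
  refine ⟨hP.unit, SetLike.ext fun M => ?_⟩
  rw [← SetLike.mem_coe, hC, mem_map_conj_range_diagGL_iff, IsUnit.unit_spec]
  exact hform M

lemma condE_diagGL_iff (a b : ℕ) (st : ℤ_[p]ˣ × ℤ_[p]ˣ) :
    CondE a b (diagGL ℤ_[p] st) ↔
      (valEq ((st.1 : ℤ_[p]) - 1) a ∧ valEq ((st.2 : ℤ_[p]) - 1) (a + b)) ∨
        (valEq ((st.1 : ℤ_[p]) - 1) (a + b) ∧ valEq ((st.2 : ℤ_[p]) - 1) a) := by
  simp only [CondE, modI, valEq, ← emultiplicity_eq_coe, coe_diagGL_sub_one, det_diagonal,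
    Fin.prod_univ_two, Fin.forall_fin_two, diagonal_apply_eq, diagonal_apply_ne _ zero_ne_one,
    diagonal_apply_ne _ one_ne_zero, dvd_zero, and_true, true_and, cons_val_zero, cons_val_one]
  exact emultiplicity_split_iff (PadicInt.prime_p (p := p)) a b

noncomputable abbrev unitsRed (p : ℕ) [Fact p.Prime] (n : ℕ) : ℤ_[p]ˣ →* (ZMod (p ^ n))ˣ :=
  Units.map (PadicInt.toZModPow (p := p) n).toMonoidHom

lemma unitsRed_surjective {n : ℕ} (hn : n ≠ 0) : Function.Surjective (unitsRed p n) := by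
  have : Fact (1 < p ^ n) := ⟨Nat.one_lt_pow hn (Fact.out : p.Prime).one_lt⟩
  have hsurj := ZMod.ringHom_surjective (PadicInt.toZModPow (p := p) n)
  exact IsLocalRing.surjective_units_map_of_local_ringHom _ hsurj (.of_surjective _ hsurj)

lemma unitsRed_eq_one_iff (k : ℕ) (s : ℤ_[p]ˣ) :
    unitsRed p k s = 1 ↔ (p : ℤ_[p]) ^ k ∣ (s : ℤ_[p]) - 1 := by
  rw [Units.ext_iff, Units.val_one]
  change PadicInt.toZModPow k (s : ℤ_[p]) = 1 ↔ _
  rw [← sub_eq_zero, ← map_one (PadicInt.toZModPow k), ← map_sub, ← RingHom.mem_ker,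
    PadicInt.ker_toZModPow, Ideal.mem_span_singleton]

lemma unitsMap_unitsRed {k n : ℕ} (hk : k ≤ n) (s : ℤ_[p]ˣ) :
    ZMod.unitsMap (pow_dvd_pow p hk) (unitsRed p n s) = unitsRed p k s :=
  Units.ext (PadicInt.cast_toZModPow (p := p) k n hk s)

lemma pow_dvd_sub_one_iff_mem_ker {k n : ℕ} (hk : k ≤ n) (s : ℤ_[p]ˣ) :
    (p : ℤ_[p]) ^ k ∣ (s : ℤ_[p]) - 1 ↔
      unitsRed p n s ∈ (ZMod.unitsMap (pow_dvd_pow p hk)).ker := by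
  rw [MonoidHom.mem_ker, unitsMap_unitsRed hk, unitsRed_eq_one_iff]

lemma unitsRed_mem_unitsLevel_iff {n k : ℕ} (hk : k + 1 ≤ n) (s : ℤ_[p]ˣ) :
    unitsRed p n s ∈ unitsLevel p hk ↔ valEq ((s : ℤ_[p]) - 1) k := by
  rw [valEq, pow_dvd_sub_one_iff_mem_ker (Nat.le_of_succ_le hk), pow_dvd_sub_one_iff_mem_ker hk]
  rfl

def unitsLevelDensity (p k : ℕ) : ℚ :=
  if k = 0 then ((p : ℚ) - 2) / (p - 1) else ((p : ℚ) ^ k)⁻¹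

lemma one_div_totient_sub_one_div_totient (k : ℕ) :
    (1 / ((p ^ k).totient : ℚ)) - 1 / (p ^ (k + 1)).totient = unitsLevelDensity p k := by
  have hp := (Fact.out : p.Prime)
  have hp1 : (p : ℚ) - 1 ≠ 0 := sub_ne_zero.mpr (by exact_mod_cast hp.one_lt.ne')
  have hp0 : (p : ℚ) ≠ 0 := by exact_mod_cast hp.ne_zero
  rcases k with _ | k
  · simp only [unitsLevelDensity, pow_zero, Nat.totient_one, Nat.cast_one, zero_add, pow_one,
      Nat.totient_prime hp, Nat.cast_sub hp.one_le, if_true]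
    field_simp
    ring
  · simp only [unitsLevelDensity, Nat.totient_prime_pow_succ hp, Nat.cast_mul, Nat.cast_pow,
      Nat.cast_sub hp.one_le, Nat.cast_one, add_eq_zero, one_ne_zero, and_false, if_false]
    field_simp
    ring

lemma ncard_ker_unitsMap {j n : ℕ} (hj : j ≤ n) :
    (((ZMod.unitsMap (pow_dvd_pow p hj)).ker : Set (ZMod (p ^ n))ˣ).ncard : ℚ)
      = (p ^ n).totient / (p ^ j).totient := by
  have : NeZero (p ^ n) := ⟨pow_ne_zero n (Fact.out : p.Prime).ne_zero⟩
  have htot : ((p ^ j).totient : ℚ) ≠ 0 := by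
    exact_mod_cast (Nat.totient_pos.mpr (pow_pos (Fact.out : p.Prime).pos j)).ne'
  rw [eq_div_iff htot, ← Nat.card_coe_set_eq]
  exact_mod_cast card_ker_unitsMap_mul_totient (pow_dvd_pow p hj)

lemma ncard_unitsLevel {n k : ℕ} (hk : k + 1 ≤ n) :
    ((unitsLevel p hk).ncard : ℚ) = (p ^ n).totient * unitsLevelDensity p k := by
  have hcard := congrArg (Nat.cast : ℕ → ℚ)
    (Set.ncard_sdiff_add_ncard_of_subset (ker_unitsMap_pow_mono p k.le_succ hk))
  rw [Nat.cast_add, ncard_ker_unitsMap hk, ncard_ker_unitsMap (Nat.le_of_succ_le hk)] at hcard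
  rw [unitsLevel, ← one_div_totient_sub_one_div_totient, mul_sub, mul_one_div, mul_one_div]
  linarith

def unitsLevelPairs (p a b : ℕ) : Set ((ZMod (p ^ (a + b + 1)))ˣ × (ZMod (p ^ (a + b + 1)))ˣ) :=
  unitsLevel p (k := a) (by omega) ×ˢ unitsLevel p (k := a + b) le_rfl ∪
    unitsLevel p (k := a + b) le_rfl ×ˢ unitsLevel p (k := a) (by omega)

lemma ncard_unitsLevelPairs (a b : ℕ) :
    ((unitsLevelPairs p a b).ncard : ℚ) = (p ^ (a + b + 1)).totient ^ 2 *
      if b = 0 then unitsLevelDensity p a ^ 2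
      else 2 * unitsLevelDensity p a * unitsLevelDensity p (a + b) := by
  rcases Nat.eq_zero_or_pos b with rfl | hb
  · simp only [unitsLevelPairs, Set.union_self, Set.ncard_prod, Nat.cast_mul,
      ncard_unitsLevel (p := p), add_zero, if_true]
    ring
  · have hdisj := disjoint_unitsLevel p (k := a) (k' := a + b) (by omega) le_rfl (by omega)
    rw [unitsLevelPairs, Set.ncard_union_eq (Set.disjoint_prod.mpr (Or.inl hdisj)),
      Set.ncard_prod, Set.ncard_prod, if_neg hb.ne']
    push_cast [ncard_unitsLevel (p := p)]
    ring

lemma condE_diagGL_iff_mem_unitsLevelPairs (a b : ℕ) (st : ℤ_[p]ˣ × ℤ_[p]ˣ) :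
    CondE a b (diagGL ℤ_[p] st) ↔
      Prod.map (unitsRed p (a + b + 1)) (unitsRed p (a + b + 1)) st ∈ unitsLevelPairs p a b := by
  simp only [condE_diagGL_iff, unitsLevelPairs, Set.mem_union, Set.mem_prod, Prod.map_fst,
    Prod.map_snd, unitsRed_mem_unitsLevel_iff]

lemma Mset_range_diagGL (a b : ℕ) :
    Mset (diagGL ℤ_[p]).range a b = diagGL ℤ_[p] ''
      (Prod.map (unitsRed p (a + b + 1)) (unitsRed p (a + b + 1)) ⁻¹' unitsLevelPairs p a b) := by
  ext M
  simp only [Mset, MonoidHom.mem_range, Set.mem_image, Set.mem_preimage,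
    ← condE_diagGL_iff_mem_unitsLevelPairs, Set.mem_ofPred]
  constructor
  · rintro ⟨⟨st, rfl⟩, hE⟩
    exact ⟨st, hE, rfl⟩
  · rintro ⟨st, hE, rfl⟩
    exact ⟨⟨st, rfl⟩, hE⟩

lemma redGL_diagGL (n : ℕ) (st : ℤ_[p]ˣ × ℤ_[p]ˣ) :
    redGL p n (diagGL ℤ_[p] st) = diagGL _ (Prod.map (unitsRed p n) (unitsRed p n) st) := by
  ext i j
  fin_cases i <;> fin_cases j <;> simp [redGL]

lemma ncard_redGL_image_diagGL {n : ℕ} (hn : n ≠ 0)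
    (T : Set ((ZMod (p ^ n))ˣ × (ZMod (p ^ n))ˣ)) :
    (redGL p n '' (diagGL ℤ_[p] '' (Prod.map (unitsRed p n) (unitsRed p n) ⁻¹' T))).ncard
      = T.ncard := by
  have hsurj := (unitsRed_surjective (p := p) hn).prodMap (unitsRed_surjective (p := p) hn)
  simp only [Set.image_image, redGL_diagGL]
  rw [← Set.image_image, Set.image_preimage_eq T hsurj,
    Set.ncard_image_of_injective _ diagGL_injective]

lemma mu_range_diagGL (a b : ℕ) :
    mu p (diagGL ℤ_[p]).range a b = if b = 0 then unitsLevelDensity p a ^ 2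
      else 2 * unitsLevelDensity p a * unitsLevelDensity p (a + b) := by
  have : NeZero (p ^ (a + b + 1)) := ⟨pow_ne_zero _ (Fact.out : p.Prime).ne_zero⟩
  have htot : ((p ^ (a + b + 1)).totient : ℚ) ≠ 0 := by
    exact_mod_cast (Nat.totient_pos.mpr (pow_pos (Fact.out : p.Prime).pos _)).ne'
  have hrange : ((diagGL ℤ_[p]).range : Set (GL (Fin 2) ℤ_[p])) =
      diagGL ℤ_[p] '' (Prod.map (unitsRed p (a + b + 1)) (unitsRed p (a + b + 1)) ⁻¹' .univ) := by
    rw [Set.preimage_univ, Set.image_univ, MonoidHom.coe_range]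
  rw [mu, Mset_range_diagGL, hrange, ncard_redGL_image_diagGL (by omega),
    ncard_redGL_image_diagGL (by omega), ncard_unitsLevelPairs, Set.ncard_univ, Nat.card_prod,
    Nat.card_eq_fintype_card, ZMod.card_units_eq_totient]
  push_cast
  field_simp

/-- the values `μ_{a,b}(C)` for a split Cartan subgroup. -/
theorem mu_split_Cartan_values
    (p : ℕ) [Fact p.Prime] (c d : ℤ_[p]) (C : Subgroup (GL (Fin 2) ℤ_[p]))
    (hC : IsCartan c d C) (hsplit : SplitParams p c d) (a b : ℕ) :
    mu p C a b =
      if a = 0 ∧ b = 0 then ((p : ℚ) - 2) ^ 2 / ((p : ℚ) - 1) ^ 2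
      else if a = 0 then 2 * ((p : ℚ) - 2) / ((p : ℚ) - 1) * ((p : ℚ) ^ b)⁻¹
      else if b = 0 then ((p : ℚ) ^ (2 * a))⁻¹
      else 2 * ((p : ℚ) ^ (2 * a + b))⁻¹ := by
  obtain ⟨g, rfl⟩ := hC.exists_eq_map_conj_range_diagGL hsplit
  rw [mu_map_conj, mu_range_diagGL]
  rcases eq_or_ne a 0 with rfl | ha <;> rcases eq_or_ne b 0 with rfl | hb
  · simp [unitsLevelDensity, div_pow]
  · simp only [unitsLevelDensity, hb, if_false, if_true, zero_add, and_false]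
    ring
  · simp [unitsLevelDensity, ha, pow_mul']
  · simp only [unitsLevelDensity, ha, hb, Nat.add_eq_zero_iff, and_self, if_false, pow_add,
      pow_mul']
    ring
end

section
/- Let C = C(c,d) be a nonsplit Cartan subgroup of GL₂(ℤ_ℓ). Then for all integers a, b ≥ 0: μ_{a,b}(C) equals (ℓ² − 2)/(ℓ² − 1) if a = 0 and b = 0; equals ℓ^{−2a} if a > 0 and b = 0; and equals 0 if b > 0 (indeed 𝓜_{a,b}(C) is empty whenever b > 0). -/
/-!
An element of `C(c, d)` is determined by its first column `(x, y)`, and its determinant is the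
norm form `N(x, y) = x (x + c y) - d y ^ 2` of `ℤ_ℓ[t] / (t ^ 2 - c t - d)`. Nonsplit means that
`N` is anisotropic modulo `ℓ` (by Hensel's lemma for odd `ℓ`, since `d` is then a nonsquare
modulo `ℓ`; by inspection for `ℓ = 2`), hence `v_ℓ (N(u, v)) = 2 min (v_ℓ u, v_ℓ v)`. As `M - 1`
has the same shape with first column `(x - 1, y)`, condition `E(a, b)` forces `b = 0`, and
`E(a, 0)` says that `(x, y) ≡ (1, 0)` modulo `ℓ ^ a` but not modulo `ℓ ^ (a + 1)`. Both counts
in `μ_{a,0}` are then counts of first columns modulo `ℓ ^ (a + 1)`: all primitive columns,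
`ℓ ^ (2a) (ℓ ^ 2 - 1)` of them, and the primitive columns `≡ (1, 0)` modulo `ℓ ^ a` other than
`(1, 0)` itself, of which there are `ℓ ^ 2 - 1` for `a > 0` and `ℓ ^ 2 - 2` for `a = 0`.
-/

open Matrix Polynomial

namespace PadicInt

variable {p : ℕ} [Fact p.Prime]

theorem isUnit_iff_not_dvd {z : ℤ_[p]} : IsUnit z ↔ ¬(p : ℤ_[p]) ∣ z := by
  rw [← not_iff_not, not_isUnit_iff, norm_lt_one_iff_dvd, not_not]

theorem toZMod_eq_zero_iff {z : ℤ_[p]} : toZMod z = 0 ↔ (p : ℤ_[p]) ∣ z := by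
  rw [← RingHom.mem_ker, ker_toZMod, maximalIdeal_eq_span_p, Ideal.mem_span_singleton]

theorem toZModPow_eq_zero_iff {n : ℕ} {z : ℤ_[p]} :
    toZModPow n z = 0 ↔ (p : ℤ_[p]) ^ n ∣ z := by
  rw [← RingHom.mem_ker, ker_toZModPow, Ideal.mem_span_singleton]

theorem natCast_pow_dvd_toZModPow_iff {n k : ℕ} (hk : k ≤ n) {z : ℤ_[p]} :
    (p : ZMod (p ^ n)) ^ k ∣ toZModPow n z ↔ (p : ℤ_[p]) ^ k ∣ z := by
  refine ⟨fun ⟨w, hw⟩ ↦ ?_, fun ⟨w, hw⟩ ↦ ⟨toZModPow n w, by simp [hw]⟩⟩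
  obtain ⟨w, rfl⟩ := ZMod.ringHom_surjective (toZModPow n) w
  have : (p : ℤ_[p]) ^ n ∣ z - p ^ k * w := toZModPow_eq_zero_iff.mp (by simp [hw])
  exact (dvd_sub_left (dvd_mul_right _ _)).mp ((pow_dvd_pow _ hk).trans this)

theorem natCast_dvd_toZModPow_iff {n : ℕ} (hn : n ≠ 0) {z : ℤ_[p]} :
    (p : ZMod (p ^ n)) ∣ toZModPow n z ↔ (p : ℤ_[p]) ∣ z := by
  simpa using natCast_pow_dvd_toZModPow_iff (Nat.one_le_iff_ne_zero.mpr hn) (k := 1) (z := z)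

theorem isUnit_two (hodd : Odd p) : IsUnit (2 : ℤ_[p]) := by
  rw [isUnit_iff_not_dvd, ← toZMod_eq_zero_iff, map_ofNat]
  intro h
  have h2 : p ∣ 2 := (ZMod.natCast_eq_zero_iff 2 p).mp (by exact_mod_cast h)
  obtain rfl := (Nat.prime_dvd_prime_iff_eq Fact.out Nat.prime_two).mp h2
  exact absurd hodd (by decide)

theorem isSquare_of_isSquare_toZMod (hodd : Odd p) {d : ℤ_[p]} (hd : IsUnit d)
    (h : IsSquare (toZMod d)) : IsSquare d := by
  obtain ⟨s, hs⟩ := h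
  obtain ⟨a, rfl⟩ := ZMod.ringHom_surjective toZMod s
  have ha : IsUnit a := by
    rw [isUnit_iff_not_dvd, ← toZMod_eq_zero_iff]
    intro h0
    rw [isUnit_iff_not_dvd, ← toZMod_eq_zero_iff, hs, h0, mul_zero] at hd
    exact hd rfl
  have hF : ‖(X ^ 2 - C d).aeval a‖ < ‖(X ^ 2 - C d : ℤ_[p][X]).derivative.aeval a‖ ^ 2 := by
    have hder : ‖(X ^ 2 - C d : ℤ_[p][X]).derivative.aeval a‖ = 1 := by
      simpa [one_add_one_eq_two] using isUnit_iff.mp ((isUnit_two hodd).mul ha)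
    rw [hder, one_pow, norm_lt_one_iff_dvd, ← toZMod_eq_zero_iff]
    simp [hs, sq]
  obtain ⟨z, hz, -⟩ := hensels_lemma hF
  exact ⟨z, by simpa [sub_eq_zero, sq, eq_comm] using hz⟩

theorem pow_succ_dvd_pow_mul_iff {k : ℕ} {u : ℤ_[p]} :
    (p : ℤ_[p]) ^ (k + 1) ∣ p ^ k * u ↔ (p : ℤ_[p]) ∣ u := by
  have hp : (p : ℤ_[p]) ≠ 0 := Nat.cast_ne_zero.mpr (Fact.out : p.Prime).ne_zero
  rw [pow_succ, mul_dvd_mul_iff_left (pow_ne_zero _ hp)]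

end PadicInt

theorem valEq.unique {p : ℕ} [Fact p.Prime] {x : ℤ_[p]} {k m : ℕ} (hk : valEq x k)
    (hm : valEq x m) : k = m := by
  by_contra hne
  rcases Nat.lt_or_gt_of_ne hne with h | h
  · exact hk.2 ((pow_dvd_pow _ h).trans hm.1)
  · exact hm.2 ((pow_dvd_pow _ h).trans hk.1)

section CommRing

variable {R S : Type*} [CommRing R] [CommRing S]

/-- The norm form of `R[t] / (t ^ 2 - c t - d)` in the basis `1, t`. -/
def cartanNorm (c d x y : R) : R := x * (x + c * y) - d * y ^ 2

theorem map_cartanNorm (f : R →+* S) (c d x y : R) :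
    f (cartanNorm c d x y) = cartanNorm (f c) (f d) (f x) (f y) := by
  simp [cartanNorm]

theorem cartanNorm_mul_mul (c d t x y : R) :
    cartanNorm c d (t * x) (t * y) = t ^ 2 * cartanNorm c d x y := by
  unfold cartanNorm; ring

def cartanMatrix (c d x y : R) : Matrix (Fin 2) (Fin 2) R := !![x, d * y; y, x + c * y]

theorem det_cartanMatrix (c d x y : R) : (cartanMatrix c d x y).det = cartanNorm c d x y := by
  rw [cartanMatrix, det_fin_two_of, cartanNorm]; ring

theorem cartanMatrix_sub_one (c d x y : R) :
    cartanMatrix c d x y - 1 = cartanMatrix c d (x - 1) y := by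
  ext i j; fin_cases i <;> fin_cases j <;> simp [cartanMatrix, sub_add_eq_add_sub]

theorem map_cartanMatrix (f : R →+* S) (c d x y : R) :
    (cartanMatrix c d x y).map f = cartanMatrix (f c) (f d) (f x) (f y) := by
  ext i j; fin_cases i <;> fin_cases j <;> simp [cartanMatrix]

def firstColumn (M : GL (Fin 2) R) : R × R :=
  ((M : Matrix (Fin 2) (Fin 2) R) 0 0, (M : Matrix (Fin 2) (Fin 2) R) 1 0)

theorem firstColumn_of_coe_eq_cartanMatrix {M : GL (Fin 2) R} {c d x y : R}
    (hM : (M : Matrix (Fin 2) (Fin 2) R) = cartanMatrix c d x y) : firstColumn M = (x, y) := by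
  simp [firstColumn, hM, cartanMatrix]

theorem firstColumn_injOn (c d : R) :
    Set.InjOn firstColumn
      {M : GL (Fin 2) R | ∃ x y, (M : Matrix (Fin 2) (Fin 2) R) = cartanMatrix c d x y} := by
  rintro M ⟨x, y, hM⟩ N ⟨x', y', hN⟩ h
  rw [firstColumn_of_coe_eq_cartanMatrix hM, firstColumn_of_coe_eq_cartanMatrix hN,
    Prod.mk.injEq] at h
  ext1
  rw [hM, hN, h.1, h.2]

def primitivePairs (q : R) : Set (R × R) := {v | ¬(q ∣ v.1 ∧ q ∣ v.2)}

def pairsModEqOneZero (q : R) (a : ℕ) : Set (R × R) := {v | q ^ a ∣ v.1 - 1 ∧ q ^ a ∣ v.2}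

theorem pairsModEqOneZero_zero (q : R) : pairsModEqOneZero q 0 = Set.univ := by
  simp [pairsModEqOneZero]

end CommRing

section Nonsplit

open PadicInt

variable {p : ℕ} [Fact p.Prime] {c d : ℤ_[p]}

theorem zmod_two_cartanNorm_one_one_ne_zero :
    ∀ {x y : ZMod 2}, x ≠ 0 ∨ y ≠ 0 → cartanNorm 1 1 x y ≠ 0 := by
  unfold cartanNorm
  decide

theorem cartanNorm_toZMod_ne_zero (hns : NonsplitParams p c d) {x y : ZMod p}
    (hxy : x ≠ 0 ∨ y ≠ 0) : cartanNorm (toZMod c) (toZMod d) x y ≠ 0 := by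
  rcases hns with ⟨hodd, rfl, hd, hsq⟩ | ⟨rfl, rfl, hd⟩
  · intro h
    simp only [cartanNorm, map_zero, zero_mul, add_zero, sub_eq_zero] at h
    rcases eq_or_ne y 0 with rfl | hy
    · exact hxy.resolve_right (not_not.mpr rfl) (mul_self_eq_zero.mp (by simpa using h))
    · refine hsq (isSquare_of_isSquare_toZMod hodd hd ⟨x / y, ?_⟩)
      field_simp
      linear_combination h.symm
  · obtain ⟨u, hu⟩ := hd.map toZMod
    rw [map_one, ← hu, Subsingleton.elim u 1, Units.val_one]
    exact zmod_two_cartanNorm_one_one_ne_zero hxy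

theorem isUnit_cartanNorm_iff (hns : NonsplitParams p c d) {x y : ℤ_[p]} :
    IsUnit (cartanNorm c d x y) ↔ ¬((p : ℤ_[p]) ∣ x ∧ (p : ℤ_[p]) ∣ y) := by
  rw [isUnit_iff_not_dvd, not_iff_not, ← toZMod_eq_zero_iff, ← toZMod_eq_zero_iff,
    ← toZMod_eq_zero_iff, map_cartanNorm]
  refine ⟨fun h ↦ ?_, fun ⟨hx, hy⟩ ↦ by simp [cartanNorm, hx, hy]⟩
  by_contra hxy
  exact cartanNorm_toZMod_ne_zero hns (not_and_or.mp hxy) h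

theorem valEq_cartanNorm (hns : NonsplitParams p c d) {a : ℕ} {u v : ℤ_[p]}
    (hu : (p : ℤ_[p]) ^ a ∣ u) (hv : (p : ℤ_[p]) ^ a ∣ v)
    (huv : ¬((p : ℤ_[p]) ^ (a + 1) ∣ u ∧ (p : ℤ_[p]) ^ (a + 1) ∣ v)) :
    valEq (cartanNorm c d u v) (2 * a) := by
  obtain ⟨u, rfl⟩ := hu
  obtain ⟨v, rfl⟩ := hv
  simp only [pow_succ_dvd_pow_mul_iff] at huv
  have hunit := (isUnit_cartanNorm_iff hns).mpr huv
  rw [cartanNorm_mul_mul, ← pow_mul, mul_comm a 2]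
  exact ⟨dvd_mul_right _ _, fun h ↦ isUnit_iff_not_dvd.mp hunit (pow_succ_dvd_pow_mul_iff.mp h)⟩

end Nonsplit

section CartanSubgroup

open PadicInt

variable {p : ℕ} [Fact p.Prime] {c d : ℤ_[p]} {C : Subgroup (GL (Fin 2) ℤ_[p])}

theorem firstColumn_redGL (n : ℕ) (M : GL (Fin 2) ℤ_[p]) :
    firstColumn (redGL p n M) = Prod.map (toZModPow n) (toZModPow n) (firstColumn M) :=
  rfl

theorem modI_iff_of_coe_eq_cartanMatrix {M : GL (Fin 2) ℤ_[p]} {x y : ℤ_[p]} {k : ℕ}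
    (hM : (M : Matrix (Fin 2) (Fin 2) ℤ_[p]) = cartanMatrix c d x y) :
    modI k M ↔ (p : ℤ_[p]) ^ k ∣ x - 1 ∧ (p : ℤ_[p]) ^ k ∣ y := by
  rw [modI, hM, cartanMatrix_sub_one]
  refine ⟨fun h ↦ ⟨h 0 0, h 1 0⟩, fun ⟨hx, hy⟩ i j ↦ ?_⟩
  fin_cases i <;> fin_cases j <;> simp [cartanMatrix, hx, hy, Dvd.dvd.mul_left, dvd_add]

theorem condE_iff_of_coe_eq_cartanMatrix (hns : NonsplitParams p c d) {M : GL (Fin 2) ℤ_[p]}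
    {x y : ℤ_[p]} (hM : (M : Matrix (Fin 2) (Fin 2) ℤ_[p]) = cartanMatrix c d x y) {a b : ℕ} :
    CondE a b M ↔ b = 0 ∧
      (x, y) ∈ pairsModEqOneZero (p : ℤ_[p]) a \ pairsModEqOneZero (p : ℤ_[p]) (a + 1) := by
  rw [CondE, modI_iff_of_coe_eq_cartanMatrix hM, modI_iff_of_coe_eq_cartanMatrix hM, hM,
    cartanMatrix_sub_one, det_cartanMatrix]
  constructor
  · rintro ⟨hmod, hnot, hval⟩
    have := (valEq_cartanNorm hns hmod.1 hmod.2 hnot).unique hval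
    exact ⟨by omega, hmod, hnot⟩
  · rintro ⟨rfl, hmod, hnot⟩
    exact ⟨hmod, hnot, valEq_cartanNorm hns hmod.1 hmod.2 hnot⟩

namespace IsCartan

theorem mem_iff (hC : IsCartan c d C) {M : GL (Fin 2) ℤ_[p]} :
    M ∈ C ↔ ∃ x y, (M : Matrix (Fin 2) (Fin 2) ℤ_[p]) = cartanMatrix c d x y := by
  rw [← SetLike.mem_coe, hC]; rfl

theorem coe_eq_cartanMatrix (hC : IsCartan c d C) {M : GL (Fin 2) ℤ_[p]} (hM : M ∈ C) :
    (M : Matrix (Fin 2) (Fin 2) ℤ_[p]) =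
      cartanMatrix c d (firstColumn M).1 (firstColumn M).2 := by
  obtain ⟨x, y, h⟩ := hC.mem_iff.mp hM
  rwa [firstColumn_of_coe_eq_cartanMatrix h]

theorem firstColumn_image (hC : IsCartan c d C) (P : ℤ_[p] × ℤ_[p] → Prop) :
    firstColumn '' {M | M ∈ C ∧ P (firstColumn M)} =
      {w | IsUnit (cartanNorm c d w.1 w.2) ∧ P w} := by
  ext w
  constructor
  · rintro ⟨M, ⟨hM, hP⟩, rfl⟩
    refine ⟨?_, hP⟩
    rw [← det_cartanMatrix, ← hC.coe_eq_cartanMatrix hM, ← Matrix.isUnit_iff_isUnit_det]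
    exact M.isUnit
  · rintro ⟨hw, hP⟩
    rw [← det_cartanMatrix] at hw
    let M := Matrix.GeneralLinearGroup.mk'' _ hw
    have hwM : firstColumn M = w := firstColumn_of_coe_eq_cartanMatrix rfl
    exact ⟨M, ⟨hC.mem_iff.mpr ⟨_, _, rfl⟩, hwM ▸ hP⟩, hwM⟩

theorem ncard_redGL_image (hC : IsCartan c d C) {S : Set (GL (Fin 2) ℤ_[p])} (hS : S ⊆ C)
    (n : ℕ) :
    (redGL p n '' S).ncard =
      (Prod.map (toZModPow n) (toZModPow n) '' (firstColumn '' S)).ncard := by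
  have hinj : Set.InjOn firstColumn (redGL p n '' S) := by
    refine (firstColumn_injOn (toZModPow n c) (toZModPow n d)).mono ?_
    rintro _ ⟨M, hM, rfl⟩
    exact ⟨_, _, (congrArg (Matrix.map · (toZModPow n)) (hC.coe_eq_cartanMatrix (hS hM))).trans
      (map_cartanMatrix _ _ _ _ _)⟩
  rw [← hinj.ncard_image, Set.image_image, Set.image_image]
  simp only [firstColumn_redGL]

theorem mset_eq (hC : IsCartan c d C) (hns : NonsplitParams p c d) (a b : ℕ) :
    Mset C a b = {M | M ∈ C ∧ (b = 0 ∧ firstColumn M ∈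
      pairsModEqOneZero (p : ℤ_[p]) a \ pairsModEqOneZero (p : ℤ_[p]) (a + 1))} := by
  ext M
  exact and_congr_right fun hM ↦ condE_iff_of_coe_eq_cartanMatrix hns (hC.coe_eq_cartanMatrix hM)

theorem mset_eq_empty (hC : IsCartan c d C) (hns : NonsplitParams p c d) {a b : ℕ}
    (hb : 0 < b) : Mset C a b = ∅ := by
  simp [hC.mset_eq hns, hb.ne']

theorem firstColumn_image_self (hC : IsCartan c d C) (hns : NonsplitParams p c d) :
    firstColumn '' (C : Set (GL (Fin 2) ℤ_[p])) = primitivePairs (p : ℤ_[p]) := by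
  simpa [Set.ext_iff, isUnit_cartanNorm_iff hns, primitivePairs] using
    hC.firstColumn_image fun _ ↦ True

theorem firstColumn_image_mset (hC : IsCartan c d C) (hns : NonsplitParams p c d) (a : ℕ) :
    firstColumn '' Mset C a 0 = primitivePairs (p : ℤ_[p]) ∩
      (pairsModEqOneZero (p : ℤ_[p]) a \ pairsModEqOneZero (p : ℤ_[p]) (a + 1)) := by
  simp only [hC.mset_eq hns, true_and, hC.firstColumn_image]
  ext w
  simp [isUnit_cartanNorm_iff hns, primitivePairs]

end IsCartan

end CartanSubgroup

section Counting

open PadicInt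

variable {p : ℕ} [Fact p.Prime]

theorem ncard_natCast_pow_dvd {n k : ℕ} (hk : k ≤ n) :
    {x : ZMod (p ^ n) | (p : ZMod (p ^ n)) ^ k ∣ x}.ncard = p ^ (n - k) := by
  let f := (ZMod.castHom (pow_dvd_pow p hk) (ZMod (p ^ k))).toAddMonoidHom
  have hker : {x : ZMod (p ^ n) | (p : ZMod (p ^ n)) ^ k ∣ x} = f.ker := by
    ext x
    obtain ⟨z, rfl⟩ := ZMod.ringHom_surjective (toZModPow n) x
    rw [Set.mem_ofPred_eq, natCast_pow_dvd_toZModPow_iff hk, ← toZModPow_eq_zero_iff,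
      ← zmod_cast_comp_toZModPow k n hk]
    rfl
  have hrange : f.range = ⊤ :=
    AddMonoidHom.range_eq_top.mpr (ZMod.castHom_surjective (pow_dvd_pow p hk))
  have hcard := f.ker.card_mul_index
  rw [AddSubgroup.index_ker, hrange, AddSubgroup.card_top, Nat.card_zmod, Nat.card_zmod] at hcard
  rw [hker, ← Nat.card_coe_set_eq]
  exact Nat.eq_of_mul_eq_mul_right (pow_pos (Fact.out : p.Prime).pos k)
    (hcard.trans (pow_sub_mul_pow p hk).symm)

theorem natCast_not_dvd_one {n : ℕ} (hn : n ≠ 0) : ¬(p : ZMod (p ^ n)) ∣ 1 := by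
  rw [← map_one (toZModPow n), natCast_dvd_toZModPow_iff hn]
  exact isUnit_iff_not_dvd.mp isUnit_one

theorem ncard_primitivePairs (m : ℕ) :
    (primitivePairs (p : ZMod (p ^ (m + 1)))).ncard = p ^ (2 * m) * (p ^ 2 - 1) := by
  set K := {x : ZMod (p ^ (m + 1)) | (p : ZMod (p ^ (m + 1))) ∣ x}
  have hK : K.ncard = p ^ m := by
    simpa [K] using ncard_natCast_pow_dvd (p := p) (by omega : 1 ≤ m + 1)
  have h := Set.ncard_add_ncard_compl (K ×ˢ K)
  rw [Set.ncard_prod, hK, Nat.card_prod, Nat.card_zmod] at h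
  have hset : (K ×ˢ K)ᶜ = primitivePairs (p : ZMod (p ^ (m + 1))) := by
    ext; simp [K, primitivePairs]
  rw [← hset, Nat.mul_sub_one]
  refine Nat.eq_sub_of_add_eq' ?_
  calc p ^ (2 * m) + _ = p ^ m * p ^ m + _ := by ring
    _ = p ^ (m + 1) * p ^ (m + 1) := h
    _ = p ^ (2 * m) * p ^ 2 := by ring

theorem ncard_pairsModEqOneZero {n a : ℕ} (ha : a ≤ n) :
    (pairsModEqOneZero (p : ZMod (p ^ n)) a).ncard = p ^ (n - a) * p ^ (n - a) := by
  set K := {x : ZMod (p ^ n) | (p : ZMod (p ^ n)) ^ a ∣ x}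
  have hK' : ((· - 1) ⁻¹' K).ncard = K.ncard :=
    Set.ncard_preimage_of_injective_subset_range sub_left_injective
      fun y _ ↦ ⟨y + 1, add_sub_cancel_right y 1⟩
  change (((· - 1) ⁻¹' K) ×ˢ K).ncard = _
  rw [Set.ncard_prod, hK', ncard_natCast_pow_dvd ha]

theorem primitivePairs_inter_pairsModEqOneZero {n a : ℕ} (hn : n ≠ 0) (ha : a ≠ 0) :
    primitivePairs (p : ZMod (p ^ n)) ∩ pairsModEqOneZero (p : ZMod (p ^ n)) a =
      pairsModEqOneZero (p : ZMod (p ^ n)) a := by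
  refine Set.inter_eq_right.mpr fun v hv hp ↦ natCast_not_dvd_one (p := p) hn ?_
  simpa using dvd_sub hp.1 ((dvd_pow_self _ ha).trans hv.1)

theorem ncard_primitivePairs_inter_pairsModEqOneZero_sdiff (a : ℕ) :
    ((primitivePairs (p : ZMod (p ^ (a + 1))) ∩ pairsModEqOneZero (p : ZMod (p ^ (a + 1))) a) \
      {(1, 0)}).ncard =
      (primitivePairs (p : ZMod (p ^ (a + 1))) ∩
        pairsModEqOneZero (p : ZMod (p ^ (a + 1))) a).ncard - 1 :=
  Set.ncard_sdiff_singleton_of_mem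
    ⟨fun h ↦ natCast_not_dvd_one a.succ_ne_zero h.1, by simp [pairsModEqOneZero]⟩

end Counting

section Reduction

open PadicInt

variable {p : ℕ} [Fact p.Prime] {n : ℕ}

local notation "π₂" n => Prod.map (toZModPow (p := p) n) (toZModPow (p := p) n)

theorem image_preimage_prodMap_toZModPow (T : Set (ZMod (p ^ n) × ZMod (p ^ n))) :
    (π₂ n) '' ((π₂ n) ⁻¹' T) = T :=
  Set.image_preimage_eq T <|
    Prod.map_surjective.mpr ⟨ZMod.ringHom_surjective _, ZMod.ringHom_surjective _⟩

theorem preimage_primitivePairs (hn : n ≠ 0) :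
    (π₂ n) ⁻¹' primitivePairs (p : ZMod (p ^ n)) = primitivePairs (p : ℤ_[p]) := by
  ext; simp [primitivePairs, natCast_dvd_toZModPow_iff hn]

theorem preimage_pairsModEqOneZero {a : ℕ} (ha : a ≤ n) :
    (π₂ n) ⁻¹' pairsModEqOneZero (p : ZMod (p ^ n)) a = pairsModEqOneZero (p : ℤ_[p]) a := by
  ext; simp [pairsModEqOneZero, ← natCast_pow_dvd_toZModPow_iff ha]

theorem preimage_singleton_one_zero :
    (π₂ n) ⁻¹' {(1, 0)} = pairsModEqOneZero (p : ℤ_[p]) n := by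
  ext; simp [pairsModEqOneZero, ← toZModPow_eq_zero_iff, sub_eq_zero, Prod.ext_iff]

variable {c d : ℤ_[p]} {C : Subgroup (GL (Fin 2) ℤ_[p])}

theorem IsCartan.ncard_redGL_image_self (hC : IsCartan c d C) (hns : NonsplitParams p c d)
    (m : ℕ) : (redGL p (m + 1) '' C).ncard = p ^ (2 * m) * (p ^ 2 - 1) := by
  rw [hC.ncard_redGL_image subset_rfl, hC.firstColumn_image_self hns,
    ← preimage_primitivePairs m.succ_ne_zero, image_preimage_prodMap_toZModPow,
    ncard_primitivePairs]

theorem IsCartan.ncard_redGL_image_mset (hC : IsCartan c d C) (hns : NonsplitParams p c d)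
    (a : ℕ) : (redGL p (a + 1) '' Mset C a 0).ncard =
      (primitivePairs (p : ZMod (p ^ (a + 1))) ∩
        pairsModEqOneZero (p : ZMod (p ^ (a + 1))) a).ncard - 1 := by
  rw [hC.ncard_redGL_image (fun _ hM ↦ hM.1), hC.firstColumn_image_mset hns,
    ← preimage_primitivePairs a.succ_ne_zero, ← preimage_pairsModEqOneZero a.le_succ,
    ← preimage_singleton_one_zero, ← Set.preimage_sdiff, ← Set.preimage_inter,
    image_preimage_prodMap_toZModPow, ← Set.inter_sdiff_assoc,
    ncard_primitivePairs_inter_pairsModEqOneZero_sdiff]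

theorem IsCartan.ncard_redGL_image_mset_zero (hC : IsCartan c d C)
    (hns : NonsplitParams p c d) : (redGL p 1 '' Mset C 0 0).ncard = p ^ 2 - 2 := by
  rw [hC.ncard_redGL_image_mset hns, pairsModEqOneZero_zero, Set.inter_univ,
    ncard_primitivePairs, mul_zero, pow_zero, one_mul, Nat.sub_sub]

theorem IsCartan.ncard_redGL_image_mset_of_pos (hC : IsCartan c d C)
    (hns : NonsplitParams p c d) {a : ℕ} (ha : 0 < a) :
    (redGL p (a + 1) '' Mset C a 0).ncard = p ^ 2 - 1 := by
  rw [hC.ncard_redGL_image_mset hns,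
    primitivePairs_inter_pairsModEqOneZero a.succ_ne_zero ha.ne', ncard_pairsModEqOneZero a.le_succ,
    Nat.succ_sub a.le_refl, Nat.sub_self, pow_one, ← sq]

end Reduction

/-- the values `μ_{a,b}(C)` for a nonsplit Cartan subgroup; moreover
`𝓜_{a,b}(C)` is empty whenever `b > 0`. -/
theorem mu_nonsplit_Cartan_values
    (p : ℕ) [Fact p.Prime] (c d : ℤ_[p]) (C : Subgroup (GL (Fin 2) ℤ_[p]))
    (hC : IsCartan c d C) (hnonsplit : NonsplitParams p c d) (a b : ℕ) :
    (mu p C a b =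
      if a = 0 ∧ b = 0 then ((p : ℚ) ^ 2 - 2) / ((p : ℚ) ^ 2 - 1)
      else if b = 0 then ((p : ℚ) ^ (2 * a))⁻¹
      else 0) ∧
    (0 < b → Mset C a b = ∅) := by
  refine ⟨?_, fun hb ↦ hC.mset_eq_empty hnonsplit hb⟩
  rcases Nat.eq_zero_or_pos b with rfl | hb
  · have hp : 4 ≤ p ^ 2 := by nlinarith [(Fact.out : p.Prime).two_le]
    rw [mu, add_zero]
    rcases Nat.eq_zero_or_pos a with rfl | ha
    · rw [hC.ncard_redGL_image_mset_zero hnonsplit, hC.ncard_redGL_image_self hnonsplit]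
      push_cast [Nat.cast_sub (by omega : 1 ≤ p ^ 2), Nat.cast_sub (by omega : 2 ≤ p ^ 2)]
      simp
    · have hpQ : (p : ℚ) ^ 2 - 1 ≠ 0 := by
        have : (4 : ℚ) ≤ (p : ℚ) ^ 2 := by exact_mod_cast hp
        linarith
      rw [hC.ncard_redGL_image_mset_of_pos hnonsplit ha, hC.ncard_redGL_image_self hnonsplit]
      push_cast [Nat.cast_sub (by omega : 1 ≤ p ^ 2)]
      rw [if_neg (by omega), div_mul_cancel_right₀ hpQ]
  · simp [mu, hC.mset_eq_empty hnonsplit hb, hb.ne']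
end

section
/- Let ℓ be a prime and let C = C(c,d) be a Cartan subgroup of GL₂(ℤ_ℓ) with normalized parameters (c,d). Then C has index 2 in its normalizer N in GL₂(ℤ_ℓ), and N is the disjoint union of C and the coset g·C, where g is the matrix [[1, c], [0, −1]]. -/
open Matrix Polynomial

lemma gMat_mul_self {p : ℕ} [Fact p.Prime] (c : ℤ_[p]) :
    (!![1, c; 0, -1] : Matrix (Fin 2) (Fin 2) ℤ_[p]) * !![1, c; 0, -1] = 1 := by
  rw [Matrix.mul_fin_two, Matrix.one_fin_two]
  norm_num

/-- The matrix `[[1, c], [0, −1]]` as an element of `GL₂(ℤ_p)` (it is an involution). -/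
noncomputable def gUnit {p : ℕ} [Fact p.Prime] (c : ℤ_[p]) : GL (Fin 2) ℤ_[p] :=
  ⟨!![1, c; 0, -1], !![1, c; 0, -1], gMat_mul_self c, gMat_mul_self c⟩

/-!
A matrix is of the form `[[x, d y], [y, x + c y]]` exactly when it commutes with
`ω = [[0, d], [1, c]]`. If `A` normalizes `C`, conjugating `1 + ℓω ∈ C` by `A` shows that `AωA⁻¹`
commutes with `ω` too, so it is of that form, with the trace `c` and determinant `-d` of `ω`.
For normalized parameters the only such matrices are `ω` and `c - ω = gωg⁻¹`; hence `A` or `g⁻¹A`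
commutes with `ω`, i.e. lies in `C`.
-/

open Subgroup

section Normalizer

variable {G : Type*} [Group G] {H : Subgroup G} {g : G}

lemma mem_normalizer_iff_mem_or_exists_mul (hg : g ∈ normalizer (H : Set G))
    (hN : ∀ a ∈ normalizer (H : Set G), a ∈ H ∨ g⁻¹ * a ∈ H) (a : G) :
    a ∈ normalizer (H : Set G) ↔ a ∈ H ∨ ∃ h ∈ H, a = g * h := by
  constructor
  · intro ha
    exact (hN a ha).imp_right fun h ↦ ⟨g⁻¹ * a, h, by group⟩
  · rintro (ha | ⟨h, hh, rfl⟩)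
    · exact le_normalizer ha
    · exact mul_mem hg (le_normalizer hh)

lemma index_subgroupOf_normalizer_eq_two (hg : g ∈ normalizer (H : Set G)) (hgH : g ∉ H)
    (hN : ∀ a ∈ normalizer (H : Set G), a ∈ H ∨ g⁻¹ * a ∈ H) :
    (H.subgroupOf (normalizer (H : Set G))).index = 2 := by
  rw [index_eq_two_iff_exists_notMem_and']
  refine ⟨⟨g⁻¹, inv_mem hg⟩, by simpa [mem_subgroupOf] using hgH, fun ⟨a, ha⟩ ↦ ?_⟩
  simpa [mem_subgroupOf, or_comm] using hN a ha

end Normalizer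

section Commute

lemma Commute.of_smul_left {R A : Type*} [CommRing R] [IsDomain R] [Ring A] [Algebra R A]
    [Module.IsTorsionFree R A] {r : R} (hr : r ≠ 0) {a b : A} (h : Commute (r • a) b) :
    Commute a b :=
  smul_right_injective A hr <| by
    simpa [Commute, SemiconjBy, smul_mul_assoc, mul_smul_comm] using h

variable {M : Type*} [Monoid M]

lemma Units.commute_conj_iff {u : Mˣ} {a b : M} :
    Commute (↑u * a * ↑u⁻¹) b ↔ Commute a (↑u⁻¹ * b * ↑u) := by
  have key : ∀ (v : Mˣ) (x y : M), Commute (↑v * x * ↑v⁻¹) y → Commute x (↑v⁻¹ * y * ↑v) :=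
    fun v x y h ↦ by
      calc x * (↑v⁻¹ * y * ↑v) = ↑v⁻¹ * ((↑v * x * ↑v⁻¹) * y) * ↑v := by simp [mul_assoc]
        _ = ↑v⁻¹ * (y * (↑v * x * ↑v⁻¹)) * ↑v := by rw [h.eq]
        _ = ↑v⁻¹ * y * ↑v * x := by simp [mul_assoc]
  refine ⟨key u a b, fun h ↦ (?_ : Commute b _).symm⟩
  simpa using key u⁻¹ _ _ h.symm

lemma Units.commute_inv_mul_of_conj_eq {u v : Mˣ} {x : M}
    (h : ↑u * x * ↑u⁻¹ = ↑v * x * ↑v⁻¹) : Commute ↑(v⁻¹ * u) x := by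
  rw [Units.commute_iff_mul_inv_cancel]
  calc ↑(v⁻¹ * u) * x * ↑(v⁻¹ * u)⁻¹ = ↑v⁻¹ * (↑u * x * ↑u⁻¹) * ↑v := by simp [mul_assoc]
    _ = x := by simp [h, mul_assoc]

end Commute

section CartanMatrix

variable {R : Type*} [CommRing R]

def cartanGen (c d : R) : Matrix (Fin 2) (Fin 2) R := !![0, d; 1, c]

lemma commute_cartanGen_iff {c d : R} {M : Matrix (Fin 2) (Fin 2) R} :
    Commute M (cartanGen c d) ↔ ∃ x y, M = !![x, d * y; y, x + c * y] := by
  constructor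
  · intro h
    have h00 := congrFun (congrFun h 0) 0
    have h10 := congrFun (congrFun h 1) 0
    simp [cartanGen, Matrix.mul_apply, Fin.sum_univ_two] at h00 h10
    refine ⟨M 0 0, M 1 0, ?_⟩
    rw [← h00, ← h10]
    exact Matrix.eta_fin_two M
  · rintro ⟨x, y, rfl⟩
    ext i j
    fin_cases i <;> fin_cases j <;> simp [cartanGen, Matrix.mul_apply] <;> ring

lemma trace_cartanGen (c d : R) : (cartanGen c d).trace = c := by
  simp [cartanGen, Matrix.trace_fin_two_of]

lemma det_cartanGen (c d : R) : (cartanGen c d).det = -d := by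
  simp [cartanGen, Matrix.det_fin_two_of]

lemma gMat_mul_cartanGen_mul_gMat (c d : R) :
    !![1, c; 0, -1] * cartanGen c d * !![1, c; 0, -1] = c • 1 - cartanGen c d := by
  ext i j
  fin_cases i <;> fin_cases j <;> simp [cartanGen, Matrix.mul_apply]

lemma commute_smul_one_sub_iff {A : Type*} [Ring A] [Algebra R A] {c : R} {M X : A} :
    Commute M (c • 1 - X) ↔ Commute M X := by
  have hc : Commute M (c • 1) := (Commute.one_right M).smul_right c
  refine ⟨fun h ↦ ?_, hc.sub_right⟩
  simpa using hc.sub_right h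

lemma eq_zero_and_eq_one_or_neg_one_of_trace_det [IsDomain R] [CharZero R] {d x y : R} (hd : d ≠ 0)
    (htr : x + x = 0) (hdet : x * x - d * y * y = -d) : x = 0 ∧ (y = 1 ∨ y = -1) := by
  obtain rfl : x = 0 := add_self_eq_zero.mp htr
  refine ⟨rfl, mul_self_eq_one_iff.mp ?_⟩
  have : d * (y * y - 1) = 0 := by linear_combination -hdet
  simpa [sub_eq_zero] using (mul_eq_zero.mp this).resolve_left hd

end CartanMatrix

lemma PadicInt.isUnit_one_add_p_mul {p : ℕ} [Fact p.Prime] (a : ℤ_[p]) : IsUnit (1 + p * a) := by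
  simpa using IsLocalRing.isUnit_one_sub_self_of_mem_nonunits _
    (mul_mem_nonunits_left (PadicInt.p_nonunit (p := p)) (b := -a))

lemma PadicInt.eq_zero_or_eq_one_of_trace_det_two {d x y : ℤ_[2]} (htr : x + (x + y) = 1)
    (hdet : x * (x + y) - d * y * y = -d) : (x = 0 ∧ y = 1) ∨ (x = 1 ∧ y = -1) := by
  obtain rfl : y = 1 - 2 * x := by linear_combination htr
  have h4d : IsUnit (1 + 4 * d) := by
    convert PadicInt.isUnit_one_add_p_mul (p := 2) (2 * d) using 1
    push_cast
    ring
  have : (1 + 4 * d) * (x * (x - 1)) = 0 := by linear_combination -hdet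
  rcases mul_eq_zero.mp ((mul_eq_zero.mp this).resolve_left h4d.ne_zero) with h | h
  · exact Or.inl ⟨h, by rw [h]; ring⟩
  · exact Or.inr ⟨by linear_combination h, by linear_combination -2 * h⟩

section PadicCartan

variable {p : ℕ} [Fact p.Prime] {c d : ℤ_[p]} {C : Subgroup (GL (Fin 2) ℤ_[p])}

lemma gUnit_val (c : ℤ_[p]) :
    ((gUnit c : GL (Fin 2) ℤ_[p]) : Matrix (Fin 2) (Fin 2) ℤ_[p]) = !![1, c; 0, -1] := rfl

lemma gUnit_inv_val (c : ℤ_[p]) :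
    (((gUnit c)⁻¹ : GL (Fin 2) ℤ_[p]) : Matrix (Fin 2) (Fin 2) ℤ_[p]) = !![1, c; 0, -1] := rfl

lemma NormalizedParams.eq_or_eq_of_trace_det (hcd : NormalizedParams p c d) {x y : ℤ_[p]}
    (htr : x + (x + c * y) = c) (hdet : x * (x + c * y) - d * y * y = -d) :
    (x = 0 ∧ y = 1) ∨ (x = c ∧ y = -1) := by
  rcases hcd with ⟨rfl, hd⟩ | ⟨rfl, rfl, -⟩
  · simp only [zero_mul, add_zero] at htr hdet
    obtain ⟨rfl, hy⟩ := eq_zero_and_eq_one_or_neg_one_of_trace_det hd htr hdet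
    simpa using hy
  · simp only [one_mul] at htr hdet
    exact PadicInt.eq_zero_or_eq_one_of_trace_det_two htr hdet

lemma IsCartan.mem_iff_s10 (hC : IsCartan c d C) {M : GL (Fin 2) ℤ_[p]} :
    M ∈ C ↔ Commute (M : Matrix (Fin 2) (Fin 2) ℤ_[p]) (cartanGen c d) := by
  rw [← SetLike.mem_coe, hC, commute_cartanGen_iff]
  rfl

lemma IsCartan.gUnit_notMem (hC : IsCartan c d C) : gUnit c ∉ C := by
  rw [hC.mem_iff_s10, commute_cartanGen_iff]
  rintro ⟨x, y, h⟩
  have e00 := congrFun (congrFun h 0) 0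
  have e10 := congrFun (congrFun h 1) 0
  have e11 := congrFun (congrFun h 1) 1
  simp [gUnit_val] at e00 e10 e11
  exact two_ne_zero (α := ℤ_[p]) (by linear_combination e00 + c * e10 - e11)

lemma IsCartan.gUnit_mem_normalizer (hC : IsCartan c d C) :
    gUnit c ∈ normalizer (C : Set (GL (Fin 2) ℤ_[p])) := by
  refine mem_normalizer_iff.mpr fun M ↦ ?_
  rw [hC.mem_iff_s10, hC.mem_iff_s10, Units.val_mul, Units.val_mul, Units.commute_conj_iff, gUnit_val,
    gUnit_inv_val, gMat_mul_cartanGen_mul_gMat, commute_smul_one_sub_iff]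

lemma IsCartan.commute_conj_cartanGen_of_mem_normalizer (hC : IsCartan c d C)
    {A : GL (Fin 2) ℤ_[p]} (hA : A ∈ normalizer (C : Set (GL (Fin 2) ℤ_[p]))) :
    Commute ((A : Matrix (Fin 2) (Fin 2) ℤ_[p]) * cartanGen c d * (A⁻¹ : GL (Fin 2) ℤ_[p]))
      (cartanGen c d) := by
  -- `cartanGen c d` itself need not be invertible, unlike `1 + p • cartanGen c d`.
  have hB : IsUnit (1 + (p : ℤ_[p]) • cartanGen c d) := by
    rw [Matrix.isUnit_iff_isUnit_det]
    convert PadicInt.isUnit_one_add_p_mul (c - (p : ℤ_[p]) * d) using 1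
    simp [cartanGen, Matrix.det_fin_two]
    ring
  have hBC : hB.unit ∈ C :=
    hC.mem_iff_s10.mpr ((Commute.one_left _).add_left ((Commute.refl _).smul_left _))
  have hconj := hC.mem_iff_s10.mp ((mem_normalizer_iff.mp hA _).mp hBC)
  simp only [Units.val_mul, IsUnit.unit_spec, mul_add, add_mul, mul_one, Units.mul_inv,
    mul_smul_comm, smul_mul_assoc] at hconj
  refine Commute.of_smul_left (r := (p : ℤ_[p])) (by exact_mod_cast (Fact.out : p.Prime).ne_zero) ?_
  simpa using hconj.sub_left (Commute.one_left _)

lemma IsCartan.conj_cartanGen_eq_or_eq (hC : IsCartan c d C) (hcd : NormalizedParams p c d)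
    {A : GL (Fin 2) ℤ_[p]} (hA : A ∈ normalizer (C : Set (GL (Fin 2) ℤ_[p]))) :
    (A : Matrix (Fin 2) (Fin 2) ℤ_[p]) * cartanGen c d * (A⁻¹ : GL (Fin 2) ℤ_[p]) =
        cartanGen c d ∨
      (A : Matrix (Fin 2) (Fin 2) ℤ_[p]) * cartanGen c d * (A⁻¹ : GL (Fin 2) ℤ_[p]) =
        (gUnit c : Matrix (Fin 2) (Fin 2) ℤ_[p]) * cartanGen c d *
          ((gUnit c)⁻¹ : GL (Fin 2) ℤ_[p]) := by
  obtain ⟨x, y, hxy⟩ := commute_cartanGen_iff.mp (hC.commute_conj_cartanGen_of_mem_normalizer hA)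
  have htr := Matrix.trace_units_conj A (cartanGen c d)
  have hdet := Matrix.det_units_conj A (cartanGen c d)
  rw [hxy, Matrix.trace_fin_two_of, trace_cartanGen] at htr
  rw [hxy, Matrix.det_fin_two_of, det_cartanGen] at hdet
  rw [hxy, gUnit_val, gUnit_inv_val, gMat_mul_cartanGen_mul_gMat]
  rcases hcd.eq_or_eq_of_trace_det htr hdet with ⟨rfl, rfl⟩ | ⟨rfl, rfl⟩
  · left
    simp [cartanGen]
  · right
    ext i j
    fin_cases i <;> fin_cases j <;> simp [cartanGen]

lemma IsCartan.mem_or_inv_gUnit_mul_mem (hC : IsCartan c d C) (hcd : NormalizedParams p c d)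
    {A : GL (Fin 2) ℤ_[p]} (hA : A ∈ normalizer (C : Set (GL (Fin 2) ℤ_[p]))) :
    A ∈ C ∨ (gUnit c)⁻¹ * A ∈ C := by
  rw [hC.mem_iff_s10, hC.mem_iff_s10]
  exact (hC.conj_cartanGen_eq_or_eq hcd hA).imp Units.commute_iff_mul_inv_cancel.mpr
    Units.commute_inv_mul_of_conj_eq

end PadicCartan

/-- a Cartan subgroup has index 2 in its normalizer, which is the disjoint
union of `C` and `g·C` with `g = [[1, c], [0, −1]]`. -/
theorem cartan_index_two_in_normalizer
    (p : ℕ) [Fact p.Prime] (c d : ℤ_[p]) (C : Subgroup (GL (Fin 2) ℤ_[p]))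
    (hC : IsCartan c d C) (hcd : NormalizedParams p c d) :
    (C.subgroupOf (Subgroup.normalizer (C : Set (GL (Fin 2) ℤ_[p])))).index = 2 ∧
    (∀ M : GL (Fin 2) ℤ_[p], M ∈ Subgroup.normalizer (C : Set (GL (Fin 2) ℤ_[p])) ↔ (M ∈ C ∨ ∃ h ∈ C, M = gUnit c * h)) ∧
    (∀ h ∈ C, gUnit c * h ∉ C) := by
  have hN : ∀ A ∈ normalizer (C : Set (GL (Fin 2) ℤ_[p])), A ∈ C ∨ (gUnit c)⁻¹ * A ∈ C :=
    fun _ hA ↦ hC.mem_or_inv_gUnit_mul_mem hcd hA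
  exact ⟨index_subgroupOf_normalizer_eq_two hC.gUnit_mem_normalizer hC.gUnit_notMem hN,
    mem_normalizer_iff_mem_or_exists_mul hC.gUnit_mem_normalizer hN,
    fun h hh ↦ (C.mul_mem_cancel_right hh).not.mpr hC.gUnit_notMem⟩
end

section
/- Let M ∈ GL₂(ℤ_ℓ) and let a, b ≥ 0 be integers. The group of fixed points {x ∈ ℚ_ℓ²/ℤ_ℓ² : M·x = x} (where M acts on the quotient module ℚ_ℓ²/ℤ_ℓ² induced by its action on ℚ_ℓ²) is isomorphic as an abelian group to ℤ/ℓ^aℤ × ℤ/ℓ^{a+b}ℤ if and only if M ≡ I (mod ℓ^a), M ≢ I (mod ℓ^{a+1}), and v_ℓ(det(M − I)) = 2a + b. -/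
open Matrix

/-- The standard lattice `ℤ_p² ⊆ ℚ_p²` as an additive subgroup. -/
noncomputable def stdLattice (p : ℕ) [Fact p.Prime] : AddSubgroup (Fin 2 → ℚ_[p]) where
  carrier := {v | ∀ i, ‖v i‖ ≤ 1}
  zero_mem' := by intro i; simp
  add_mem' := by
    intro a b ha hb i
    exact le_trans (Padic.nonarchimedean (a i) (b i)) (max_le (ha i) (hb i))
  neg_mem' := by
    intro a ha i
    simpa using ha i

/-- The additive map of `ℚ_p²` given by a matrix with entries in `ℤ_p`. -/
noncomputable def matQMap (p : ℕ) [Fact p.Prime] (M : Matrix (Fin 2) (Fin 2) ℤ_[p]) :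
    (Fin 2 → ℚ_[p]) →+ (Fin 2 → ℚ_[p]) :=
  (Matrix.mulVecLin (M.map ((↑) : ℤ_[p] → ℚ_[p]))).toAddMonoidHom

lemma matQMap_lattice_le (p : ℕ) [Fact p.Prime] (M : Matrix (Fin 2) (Fin 2) ℤ_[p]) :
    stdLattice p ≤ (stdLattice p).comap (matQMap p M) := by
  intro v hv
  rw [AddSubgroup.mem_comap]
  intro i
  have hx : matQMap p M v i = (M i 0 : ℚ_[p]) * v 0 + (M i 1 : ℚ_[p]) * v 1 := by
    simp [matQMap, Matrix.mulVecLin_apply, Matrix.mulVec, dotProduct,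
      Fin.sum_univ_two, Matrix.map_apply]
    rfl
  show ‖matQMap p M v i‖ ≤ 1
  rw [hx]
  have h0 : ‖(M i 0 : ℚ_[p]) * v 0‖ ≤ 1 := by
    rw [norm_mul]
    simpa using mul_le_mul (M i 0).property (hv 0) (norm_nonneg _) zero_le_one
  have h1 : ‖(M i 1 : ℚ_[p]) * v 1‖ ≤ 1 := by
    rw [norm_mul]
    simpa using mul_le_mul (M i 1).property (hv 1) (norm_nonneg _) zero_le_one
  exact le_trans (Padic.nonarchimedean _ _) (max_le h0 h1)

/-- The action of `M ∈ GL₂(ℤ_p)` on `ℚ_p²/ℤ_p²`. -/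
noncomputable def actQ (p : ℕ) [Fact p.Prime] (M : GL (Fin 2) ℤ_[p]) :
    (Fin 2 → ℚ_[p]) ⧸ stdLattice p →+ (Fin 2 → ℚ_[p]) ⧸ stdLattice p :=
  QuotientAddGroup.map _ _ (matQMap p (M : Matrix (Fin 2) (Fin 2) ℤ_[p]))
    (matQMap_lattice_le p _)

/-- The group of fixed points of `M` acting on `ℚ_p²/ℤ_p²`. -/
noncomputable def fixedPts (p : ℕ) [Fact p.Prime] (M : GL (Fin 2) ℤ_[p]) :
    AddSubgroup ((Fin 2 → ℚ_[p]) ⧸ stdLattice p) where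
  carrier := {q | actQ p M q = q}
  zero_mem' := by simp
  add_mem' := by
    intro x y hx hy
    simp only [Set.mem_setOf_eq, map_add] at *
    rw [hx, hy]
  neg_mem' := by
    intro x hx
    simp only [Set.mem_setOf_eq, map_neg] at *
    rw [hx]

/-!
The fixed points of `M` form the kernel of the endomorphism of `ℚ_p²/ℤ_p²` induced by
`N = M - 1`, and multiplying `N` on either side by matrices of `GL₂(ℤ_p)` changes this kernel
only by an isomorphism. If `det N = 0`, a `ℚ_p`-line in the kernel of `N` produces fixed points
that no fixed power of `p` kills, whereas `p^(a+b)` kills `ℤ/p^a × ℤ/p^(a+b)`. Otherwise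
`N = U diag(p^a, p^(a+b)) V` (Smith normal form), where `p^a` is the largest power of `p` dividing
all entries of `N` and `v_p(det N) = 2a + b`. The kernel of `diag(p^d₀, p^d₁)` is
`p^(-d₀)ℤ_p/ℤ_p × p^(-d₁)ℤ_p/ℤ_p ≅ ℤ/p^d₀ × ℤ/p^d₁`, and `ℤ/p^α × ℤ/p^β` with `α ≤ β` determines
`α` and `β` through its order `p^(α+β)` and its exponent `p^β`.
-/

theorem Nat.exists_and_not_add_one {P : ℕ → Prop} (h0 : P 0) (h : ∃ n, ¬ P n) :
    ∃ a, P a ∧ ¬ P (a + 1) := by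
  by_contra! H
  obtain ⟨n, hn⟩ := h
  exact hn (Nat.rec h0 H n)

theorem AddMonoid.exponent_zmod_prod (m n : ℕ) :
    AddMonoid.exponent (ZMod m × ZMod n) = Nat.lcm m n := by
  rw [AddMonoid.exponent_prod, IsAddCyclic.exponent_eq_card, IsAddCyclic.exponent_eq_card,
    Nat.card_zmod, Nat.card_zmod]
  rfl

theorem eq_and_eq_of_addEquiv_zmod_pow_prod {p α β γ δ : ℕ} (hp : 1 < p) (hαβ : α ≤ β)
    (hγδ : γ ≤ δ) (e : (ZMod (p ^ α) × ZMod (p ^ β)) ≃+ (ZMod (p ^ γ) × ZMod (p ^ δ))) :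
    α = γ ∧ β = δ := by
  have hexp := AddMonoid.exponent_eq_of_addEquiv e
  have hcard := Nat.card_congr e.toEquiv
  rw [AddMonoid.exponent_zmod_prod, AddMonoid.exponent_zmod_prod,
    Nat.lcm_eq_right (pow_dvd_pow p hαβ), Nat.lcm_eq_right (pow_dvd_pow p hγδ)] at hexp
  rw [Nat.card_prod, Nat.card_prod, Nat.card_zmod, Nat.card_zmod, Nat.card_zmod,
    Nat.card_zmod, ← pow_add, ← pow_add] at hcard
  have h1 := Nat.pow_right_injective hp hexp
  have h2 := Nat.pow_right_injective hp hcard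
  omega

namespace Matrix

variable {R : Type*} [CommRing R]

theorem exists_eq_mul_diagonal_det_mul_of_isUnit_apply_zero_zero {n : Matrix (Fin 2) (Fin 2) R}
    (hn : IsUnit (n 0 0)) :
    ∃ U V : Matrix (Fin 2) (Fin 2) R, IsUnit U.det ∧ IsUnit V.det ∧
      n = U * diagonal ![1, n.det] * V := by
  obtain ⟨u, hu⟩ := hn
  have hinv : n 0 0 * ↑u⁻¹ = 1 := by rw [← hu, Units.mul_inv]
  -- elimination with pivot `u = n 0 0`; the factor `diag(u, u⁻¹)` turns `diag(u, n.det / u)`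
  -- into `diag(1, n.det)`
  refine ⟨!![1, 0; n 1 0 * ↑u⁻¹, 1] * !![n 0 0, 0; 0, ↑u⁻¹], !![1, ↑u⁻¹ * n 0 1; 0, 1],
    ?_, ?_, ?_⟩
  · simp [det_fin_two_of, ← hu]
  · simp [det_fin_two_of]
  · rw [diagonal_fin_two]
    conv_lhs => rw [eta_fin_two n]
    ext i j
    fin_cases i <;> fin_cases j <;> simp [det_fin_two]
    · linear_combination -n 0 1 * hinv
    · linear_combination -n 1 0 * hinv
    · linear_combination -(n 1 1 + n 1 0 * n 0 1 * ↑u⁻¹) * hinv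

theorem exists_isUnit_det_isUnit_mul_apply_zero_zero {n : Matrix (Fin 2) (Fin 2) R} {i j : Fin 2}
    (hn : IsUnit (n i j)) :
    ∃ P Q : Matrix (Fin 2) (Fin 2) R, IsUnit P.det ∧ IsUnit Q.det ∧ IsUnit ((P * n * Q) 0 0) := by
  let T : Matrix (Fin 2) (Fin 2) R := !![0, 1; 1, 0]
  have hT : IsUnit T.det := by simp [T, det_fin_two_of]
  fin_cases i <;> fin_cases j
  on_goal 1 => refine ⟨1, 1, by simp, by simp, ?_⟩
  on_goal 2 => refine ⟨1, T, by simp, hT, ?_⟩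
  on_goal 3 => refine ⟨T, 1, hT, by simp, ?_⟩
  on_goal 4 => refine ⟨T, T, hT, hT, ?_⟩
  all_goals simpa [T, mul_apply, vecMul, dotProduct, Fin.sum_univ_two] using hn

theorem exists_eq_mul_diagonal_mul_of_isUnit_apply {n : Matrix (Fin 2) (Fin 2) R} {i j : Fin 2}
    (hn : IsUnit (n i j)) {d : R} (hd : Associated n.det d) :
    ∃ U V : Matrix (Fin 2) (Fin 2) R, IsUnit U.det ∧ IsUnit V.det ∧
      n = U * diagonal ![1, d] * V := by
  obtain ⟨P, Q, hP, hQ, hPQ⟩ := exists_isUnit_det_isUnit_mul_apply_zero_zero hn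
  obtain ⟨U, V, hU, hV, hUV⟩ := exists_eq_mul_diagonal_det_mul_of_isUnit_apply_zero_zero hPQ
  obtain ⟨w, hw⟩ : Associated d (P * n * Q).det := by
    rw [det_mul, det_mul, associated_mul_isUnit_right_iff hQ, associated_isUnit_mul_right_iff hP]
    exact hd.symm
  refine ⟨P⁻¹ * U, diagonal ![1, (w : R)] * V * Q⁻¹, ?_, ?_, ?_⟩
  · simpa [det_mul] using (isUnit_nonsing_inv_det P hP).mul hU
  · simpa [det_mul, det_diagonal, Fin.prod_univ_two] using
      (w.isUnit.mul hV).mul (isUnit_nonsing_inv_det Q hQ)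
  · have hdiag : diagonal ![1, (P * n * Q).det] = diagonal ![1, d] * diagonal ![1, (w : R)] := by
      rw [diagonal_mul_diagonal, ← hw]
      congr 1
      ext k
      fin_cases k <;> simp
    calc n = P⁻¹ * (P * n * Q) * Q⁻¹ := by
          rw [mul_assoc P, nonsing_inv_mul_cancel_left _ _ hP, mul_nonsing_inv_cancel_right _ _ hQ]
      _ = _ := by rw [hUV, hdiag]; simp only [mul_assoc]

end Matrix

section Valuation

variable {p : ℕ} [Fact p.Prime]

theorem PadicInt.isUnit_of_not_dvd {x : ℤ_[p]} (hx : ¬ (p : ℤ_[p]) ∣ x) : IsUnit x :=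
  IsLocalRing.notMem_maximalIdeal.mp <| by
    rwa [PadicInt.maximalIdeal_eq_span_p, Ideal.mem_span_singleton]

theorem PadicInt.exists_coe_eq_inv_pow_mul_iff_dvd {y : ℤ_[p]} {k : ℕ} :
    (∃ z : ℤ_[p], (z : ℚ_[p]) = ((p : ℚ_[p]) ^ k)⁻¹ * y) ↔ (p : ℤ_[p]) ^ k ∣ y := by
  have hpk : (p : ℚ_[p]) ^ k ≠ 0 := pow_ne_zero _ (NeZero.ne _)
  constructor
  · rintro ⟨z, hz⟩
    refine ⟨z, Subtype.ext ?_⟩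
    simp [hz, mul_inv_cancel_left₀ hpk]
  · rintro ⟨z, rfl⟩
    exact ⟨z, by simp [inv_mul_cancel_left₀ hpk]⟩

theorem valEq_valuation {x : ℤ_[p]} (hx : x ≠ 0) : valEq x x.valuation := by
  simp only [valEq, ← Ideal.mem_span_singleton, PadicInt.mem_span_pow_iff_le_valuation x hx]
  omega

theorem valEq.associated_pow {x : ℤ_[p]} {k : ℕ} (h : valEq x k) :
    Associated x ((p : ℤ_[p]) ^ k) := by
  obtain ⟨c, rfl⟩ := h.1
  refine associated_mul_unit_left _ c (PadicInt.isUnit_of_not_dvd fun hc => h.2 ?_)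
  rw [pow_succ]
  exact mul_dvd_mul_left _ hc

theorem valEq.of_pow_mul {y : ℤ_[p]} {m k : ℕ} (h : valEq ((p : ℤ_[p]) ^ m * y) (m + k)) :
    valEq y k := by
  have hpm : (p : ℤ_[p]) ^ m ≠ 0 := pow_ne_zero _ (NeZero.ne _)
  refine ⟨(mul_dvd_mul_iff_left hpm).mp ?_, fun hy => h.2 ?_⟩
  · rw [← pow_add]; exact h.1
  · rw [add_assoc, pow_add]; exact mul_dvd_mul_left _ hy

theorem pow_two_mul_dvd_det_sub_one {k : ℕ} {M : GL (Fin 2) ℤ_[p]} (h : modI k M) :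
    (p : ℤ_[p]) ^ (2 * k) ∣ ((M : Matrix (Fin 2) (Fin 2) ℤ_[p]) - 1).det := by
  rw [det_fin_two, two_mul, pow_add]
  exact dvd_sub (mul_dvd_mul (h 0 0) (h 1 1)) (mul_dvd_mul (h 0 1) (h 1 0))

theorem two_mul_le_of_modI_of_valEq {k v : ℕ} {M : GL (Fin 2) ℤ_[p]} (hk : modI k M)
    (hv : valEq ((M : Matrix (Fin 2) (Fin 2) ℤ_[p]) - 1).det v) : 2 * k ≤ v := by
  by_contra! hlt
  exact hv.2 ((pow_dvd_pow _ hlt).trans (pow_two_mul_dvd_det_sub_one hk))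

theorem exists_condE {M : GL (Fin 2) ℤ_[p]}
    (hM : ((M : Matrix (Fin 2) (Fin 2) ℤ_[p]) - 1).det ≠ 0) : ∃ a b, CondE a b M := by
  set v := ((M : Matrix (Fin 2) (Fin 2) ℤ_[p]) - 1).det.valuation
  have hv : valEq _ v := valEq_valuation hM
  obtain ⟨a, ha, ha'⟩ := Nat.exists_and_not_add_one (P := (modI · M)) (fun i j => by simp)
    ⟨v + 1, fun h => by have := two_mul_le_of_modI_of_valEq h hv; omega⟩
  refine ⟨a, v - 2 * a, ha, ha', ?_⟩
  rwa [Nat.add_sub_cancel' (two_mul_le_of_modI_of_valEq ha hv)]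

theorem exists_eq_mul_diagonal_mul_of_condE {a b : ℕ} {M : GL (Fin 2) ℤ_[p]} (h : CondE a b M) :
    ∃ U V : Matrix (Fin 2) (Fin 2) ℤ_[p], IsUnit U.det ∧ IsUnit V.det ∧
      (M : Matrix (Fin 2) (Fin 2) ℤ_[p]) - 1 =
        U * diagonal ![(p : ℤ_[p]) ^ a, (p : ℤ_[p]) ^ (a + b)] * V := by
  obtain ⟨h1, h2, h3⟩ := h
  choose n hn using h1
  have hM : (M : Matrix (Fin 2) (Fin 2) ℤ_[p]) - 1 = (p : ℤ_[p]) ^ a • of n := by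
    ext i j
    exact hn i j
  obtain ⟨i, j, hij⟩ : ∃ i j, IsUnit (n i j) := by
    by_contra! hnu
    refine h2 fun i j => ?_
    obtain ⟨c, hc⟩ := not_not.mp (mt PadicInt.isUnit_of_not_dvd (hnu i j))
    exact ⟨c, by rw [hn, hc, pow_succ, mul_assoc]⟩
  have hdet : valEq (of n).det b := by
    rw [hM, det_smul, Fintype.card_fin, ← pow_mul, mul_comm a 2] at h3
    exact h3.of_pow_mul
  obtain ⟨U, V, hU, hV, hUV⟩ :=
    exists_eq_mul_diagonal_mul_of_isUnit_apply (n := of n) hij hdet.associated_pow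
  refine ⟨U, V, hU, hV, ?_⟩
  have hD : diagonal ![(p : ℤ_[p]) ^ a, (p : ℤ_[p]) ^ (a + b)] =
      (p : ℤ_[p]) ^ a • diagonal ![1, (p : ℤ_[p]) ^ b] := by
    ext i j
    fin_cases i <;> fin_cases j <;> simp [pow_add]
  rw [hM, hUV, hD, Matrix.mul_smul, Matrix.smul_mul]

end Valuation

section Quotient

variable {p : ℕ} [Fact p.Prime]

local notation "Q" => (Fin 2 → ℚ_[p]) ⧸ stdLattice p

theorem mem_stdLattice_iff {v : Fin 2 → ℚ_[p]} :
    v ∈ stdLattice p ↔ ∀ i, ∃ z : ℤ_[p], (z : ℚ_[p]) = v i :=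
  forall_congr' fun i => ⟨fun h => ⟨⟨v i, h⟩, rfl⟩, by rintro ⟨z, hz⟩; exact hz ▸ z.norm_le_one⟩

theorem matQMap_apply (A : Matrix (Fin 2) (Fin 2) ℤ_[p]) (v : Fin 2 → ℚ_[p]) :
    matQMap p A v = (PadicInt.Coe.ringHom.mapMatrix A) *ᵥ v :=
  rfl

noncomputable def qmap (A : Matrix (Fin 2) (Fin 2) ℤ_[p]) : Q →+ Q :=
  QuotientAddGroup.map _ _ (matQMap p A) (matQMap_lattice_le p A)

theorem qmap_mk (A : Matrix (Fin 2) (Fin 2) ℤ_[p]) (v : Fin 2 → ℚ_[p]) :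
    qmap A (v : Q) = (matQMap p A v : Q) :=
  rfl

theorem qmap_mul (A B : Matrix (Fin 2) (Fin 2) ℤ_[p]) (q : Q) :
    qmap (A * B) q = qmap A (qmap B q) := by
  induction q using QuotientAddGroup.induction_on with
  | H v => simp only [qmap_mk, matQMap_apply, map_mul, mulVec_mulVec]

theorem qmap_one (q : Q) : qmap 1 q = q := by
  induction q using QuotientAddGroup.induction_on with
  | H v => simp only [qmap_mk, matQMap_apply, map_one, one_mulVec]

theorem qmap_sub_one (A : Matrix (Fin 2) (Fin 2) ℤ_[p]) (q : Q) :
    qmap (A - 1) q = qmap A q - q := by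
  induction q using QuotientAddGroup.induction_on with
  | H v => simp only [qmap_mk, matQMap_apply, map_sub, map_one, sub_mulVec, one_mulVec,
      QuotientAddGroup.mk_sub]

theorem fixedPts_eq_ker_qmap (M : GL (Fin 2) ℤ_[p]) :
    fixedPts p M = (qmap ((M : Matrix (Fin 2) (Fin 2) ℤ_[p]) - 1)).ker := by
  ext q
  rw [AddMonoidHom.mem_ker, qmap_sub_one, sub_eq_zero]
  rfl

variable {U : Matrix (Fin 2) (Fin 2) ℤ_[p]}

theorem qmap_qmap_nonsing_inv (hU : IsUnit U.det) (q : Q) : qmap U (qmap U⁻¹ q) = q := by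
  rw [← qmap_mul, mul_nonsing_inv _ hU, qmap_one]

theorem qmap_nonsing_inv_qmap (hU : IsUnit U.det) (q : Q) : qmap U⁻¹ (qmap U q) = q := by
  rw [← qmap_mul, nonsing_inv_mul _ hU, qmap_one]

noncomputable def qmapAddEquiv (hU : IsUnit U.det) : Q ≃+ Q :=
  { qmap U with
    invFun := qmap U⁻¹
    left_inv := qmap_nonsing_inv_qmap hU
    right_inv := qmap_qmap_nonsing_inv hU }

theorem ker_qmap_mul_left (hU : IsUnit U.det) (A : Matrix (Fin 2) (Fin 2) ℤ_[p]) :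
    (qmap (U * A)).ker = (qmap A).ker := by
  ext q
  simp only [AddMonoidHom.mem_ker, qmap_mul]
  exact (qmapAddEquiv hU).map_eq_zero_iff

theorem map_ker_qmap_mul_right (hU : IsUnit U.det) (A : Matrix (Fin 2) (Fin 2) ℤ_[p]) :
    (qmap (A * U)).ker.map (qmapAddEquiv hU).toAddMonoidHom = (qmap A).ker := by
  ext q
  rw [AddSubgroup.mem_map_equiv, AddMonoidHom.mem_ker, AddMonoidHom.mem_ker]
  show qmap (A * U) (qmap U⁻¹ q) = 0 ↔ _
  rw [qmap_mul, qmap_qmap_nonsing_inv hU]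

noncomputable def kerQmapMulAddEquiv {U V : Matrix (Fin 2) (Fin 2) ℤ_[p]} (hU : IsUnit U.det)
    (hV : IsUnit V.det) (A : Matrix (Fin 2) (Fin 2) ℤ_[p]) :
    (qmap (U * A * V)).ker ≃+ (qmap A).ker :=
  ((qmapAddEquiv hV).addSubgroupMap _).trans <| AddEquiv.addSubgroupCongr <| by
    rw [mul_assoc, ker_qmap_mul_left hU]
    exact map_ker_qmap_mul_right hV A

theorem matQMap_diagonal (w : Fin 2 → ℤ_[p]) (v : Fin 2 → ℚ_[p]) :
    matQMap p (diagonal w) v = fun i => (w i : ℚ_[p]) * v i := by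
  ext i
  simp only [matQMap_apply, RingHom.mapMatrix_apply, diagonal_map (map_zero _), mulVec_diagonal]
  rfl

noncomputable def divPowHom (d : Fin 2 → ℕ) : (Fin 2 → ℤ_[p]) →+ Q :=
  (QuotientAddGroup.mk' (stdLattice p)).comp
    { toFun := fun y i => ((p : ℚ_[p]) ^ d i)⁻¹ * y i
      map_zero' := by ext; simp
      map_add' := fun _ _ => by ext; simp [mul_add] }

theorem divPowHom_apply (d : Fin 2 → ℕ) (y : Fin 2 → ℤ_[p]) :
    divPowHom d y = ((fun i => ((p : ℚ_[p]) ^ d i)⁻¹ * y i : Fin 2 → ℚ_[p]) : Q) :=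
  rfl

theorem range_divPowHom (d : Fin 2 → ℕ) :
    (divPowHom d).range = (qmap (diagonal fun i => (p : ℤ_[p]) ^ d i)).ker := by
  have hpk (i) : (p : ℚ_[p]) ^ d i ≠ 0 := pow_ne_zero _ (NeZero.ne _)
  ext q
  constructor
  · rintro ⟨y, rfl⟩
    rw [AddMonoidHom.mem_ker, divPowHom_apply, qmap_mk, QuotientAddGroup.eq_zero_iff,
      mem_stdLattice_iff, matQMap_diagonal]
    exact fun i => ⟨y i, by simp [mul_inv_cancel_left₀ (hpk i)]⟩
  · induction q using QuotientAddGroup.induction_on with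
    | H v =>
    rw [AddMonoidHom.mem_ker, qmap_mk, QuotientAddGroup.eq_zero_iff, mem_stdLattice_iff,
      matQMap_diagonal]
    intro h
    choose z hz using h
    refine ⟨z, congrArg (QuotientAddGroup.mk' (stdLattice p)) (funext fun i => ?_)⟩
    simp [hz, inv_mul_cancel_left₀ (hpk i)]

theorem ker_divPowHom (d : Fin 2 → ℕ) :
    (divPowHom (p := p) d).ker =
      (AddMonoidHom.piMap fun i => (PadicInt.toZModPow (d i)).toAddMonoidHom).ker := by
  ext y
  rw [AddMonoidHom.mem_ker, AddMonoidHom.mem_ker, divPowHom_apply, QuotientAddGroup.eq_zero_iff,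
    mem_stdLattice_iff, funext_iff]
  refine forall_congr' fun i => ?_
  show (∃ z : ℤ_[p], (z : ℚ_[p]) = ((p : ℚ_[p]) ^ d i)⁻¹ * y i) ↔
    PadicInt.toZModPow (d i) (y i) = 0
  rw [PadicInt.exists_coe_eq_inv_pow_mul_iff_dvd, ← Ideal.mem_span_singleton,
    ← PadicInt.ker_toZModPow, RingHom.mem_ker]

noncomputable def kerQmapDiagonalAddEquiv (d : Fin 2 → ℕ) :
    (qmap (diagonal fun i => (p : ℤ_[p]) ^ d i)).ker ≃+ ∀ i, ZMod (p ^ d i) :=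
  (AddEquiv.addSubgroupCongr (range_divPowHom d).symm).trans <|
    (QuotientAddGroup.quotientKerEquivRange _).symm.trans <|
      (QuotientAddGroup.quotientAddEquivOfEq (ker_divPowHom d)).trans <|
        QuotientAddGroup.quotientKerEquivOfSurjective
          (AddMonoidHom.piMap fun i => (PadicInt.toZModPow (p := p) (d i)).toAddMonoidHom) <|
          .piMap fun i => ZMod.ringHom_surjective (PadicInt.toZModPow (d i))

theorem exists_mem_ker_qmap_pow_nsmul_ne_zero {A : Matrix (Fin 2) (Fin 2) ℤ_[p]}
    (hA : A.det = 0) (n : ℕ) : ∃ q ∈ (qmap A).ker, p ^ n • q ≠ 0 := by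
  have hp0 : (p : ℚ_[p]) ≠ 0 := NeZero.ne _
  have hA' : (PadicInt.Coe.ringHom.mapMatrix A).det = 0 := by
    rw [← RingHom.map_det, hA, map_zero]
  obtain ⟨w, hw0, hw⟩ := exists_mulVec_eq_zero_iff.mpr hA'
  obtain ⟨i, hi : w i ≠ 0⟩ := Function.ne_iff.mp hw0
  -- the point of the kernel line whose `i`-th coordinate becomes `p⁻¹` after scaling by `p ^ n`
  refine ⟨((((p : ℚ_[p]) ^ (n + 1) * w i)⁻¹ • w : Fin 2 → ℚ_[p]) : Q), ?_, ?_⟩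
  · rw [AddMonoidHom.mem_ker, qmap_mk, matQMap_apply, mulVec_smul, hw, smul_zero,
      QuotientAddGroup.mk_zero]
  · rw [← QuotientAddGroup.mk_nsmul, Ne, QuotientAddGroup.eq_zero_iff, mem_stdLattice_iff]
    intro h
    obtain ⟨z, hz⟩ := h i
    have hpz : ((p * z : ℤ_[p]) : ℚ_[p]) = 1 := by
      simp only [PadicInt.coe_mul, PadicInt.coe_natCast, hz, Pi.smul_apply, smul_eq_mul,
        nsmul_eq_mul, Nat.cast_pow]
      field_simp
      ring
    exact PadicInt.p_nonunit (.of_mul_eq_one z (Subtype.ext hpz))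

end Quotient

theorem nonempty_fixedPts_addEquiv_of_condE {p : ℕ} [Fact p.Prime] {a b : ℕ}
    {M : GL (Fin 2) ℤ_[p]} (h : CondE a b M) :
    Nonempty (fixedPts p M ≃+ (ZMod (p ^ a) × ZMod (p ^ (a + b)))) := by
  obtain ⟨U, V, hU, hV, hUV⟩ := exists_eq_mul_diagonal_mul_of_condE h
  have hD : diagonal ![(p : ℤ_[p]) ^ a, (p : ℤ_[p]) ^ (a + b)] =
      diagonal fun i => (p : ℤ_[p]) ^ ![a, a + b] i := by
    congr 1
    funext i
    fin_cases i <;> rfl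
  rw [fixedPts_eq_ker_qmap, hUV, hD]
  exact ⟨(kerQmapMulAddEquiv hU hV _).trans <|
    (kerQmapDiagonalAddEquiv _).trans (RingEquiv.piFinTwo _).toAddEquiv⟩

/-- the fixed points of `M` on `ℚ_ℓ²/ℤ_ℓ²` form a group isomorphic to
`ℤ/ℓ^a × ℤ/ℓ^{a+b}` if and only if condition `E(a,b)` holds. -/
theorem fixed_points_group_structure
    (p : ℕ) [Fact p.Prime] (a b : ℕ) (M : GL (Fin 2) ℤ_[p]) :
    Nonempty (fixedPts p M ≃+ (ZMod (p ^ a) × ZMod (p ^ (a + b)))) ↔ CondE a b M := by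
  refine ⟨fun ⟨e⟩ => ?_, nonempty_fixedPts_addEquiv_of_condE⟩
  have hexp : AddMonoid.exponent (fixedPts p M) = p ^ (a + b) := by
    rw [AddMonoid.exponent_eq_of_addEquiv e, AddMonoid.exponent_zmod_prod,
      Nat.lcm_eq_right (pow_dvd_pow p (Nat.le_add_right a b))]
  have hM : ((M : Matrix (Fin 2) (Fin 2) ℤ_[p]) - 1).det ≠ 0 := by
    intro hM
    obtain ⟨q, hq, hq0⟩ := exists_mem_ker_qmap_pow_nsmul_ne_zero hM (a + b)
    rw [← fixedPts_eq_ker_qmap] at hq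
    have := AddMonoid.exponent_nsmul_eq_zero (⟨q, hq⟩ : fixedPts p M)
    rw [hexp] at this
    exact hq0 (congrArg Subtype.val this)
  obtain ⟨a', b', h'⟩ := exists_condE hM
  obtain ⟨e'⟩ := nonempty_fixedPts_addEquiv_of_condE h'
  obtain ⟨rfl, hb⟩ := eq_and_eq_of_addEquiv_zmod_pow_prod (Fact.out : p.Prime).one_lt
    (Nat.le_add_right a' b') (Nat.le_add_right a b) (e'.symm.trans e)
  rwa [Nat.add_left_cancel hb] at h'
end
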